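/- arXiv:2002.02304 — 10 statements merged into one kernel-verified Lean document; each statement's English description precedes it below -/
import Mathlib

section
/- Let P ∈ ℝ^{n×n} be an orthogonal projection matrix with leverage scores σ_i = P_{ii} and P^{(2)} = P ∘ P. Then for all x ∈ ℝ^n, ‖Σ^{-1} P^{(2)} x‖_∞ ≤ ‖x‖_σ and ‖Σ^{-1} P^{(2)} x‖_∞ ≤ ‖x‖_∞, where Σ = diag(σ) is assumed invertible and ‖x‖_σ² = Σ_i σ_i x_i². -/
open Matrix

/-- Bounds on `Σ⁻¹ P⁽²⁾ x` in sup norm, by the σ-weighted norm and the sup norm of `x`. -/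
theorem stmt2 (n : ℕ) (P : Matrix (Fin n) (Fin n) ℝ) (hsym : P.IsSymm) (hproj : P * P = P)
    (hpos : ∀ i, 0 < P i i) (x : Fin n → ℝ) :
    (∀ i, |(P i i)⁻¹ * ∑ j, (P i j) ^ 2 * x j| ≤ Real.sqrt (∑ j, P j j * (x j) ^ 2)) ∧
    (∀ i, |(P i i)⁻¹ * ∑ j, (P i j) ^ 2 * x j| ≤ ‖x‖) := by
  have hsym' : ∀ i j, P j i = P i j := fun i j => by
    have := hsym; rw [Matrix.IsSymm] at this
    calc P j i = Pᵀ i j := rfl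
    _ = P i j := by rw [this]
  have hsum : ∀ i, ∑ j, (P i j) ^ 2 = P i i := by
    intro i
    have h := congrFun (congrFun hproj i) i
    simpa [Matrix.mul_apply, hsym', sq] using h
  have hCS : ∀ i j, (P i j) ^ 2 ≤ P i i * P j j := by
    intro i j
    have h := congrFun (congrFun hproj i) j
    rw [Matrix.mul_apply] at h
    have h2 : P i j = ∑ k, P i k * P j k := by
      rw [← h]; exact Finset.sum_congr rfl fun k _ => by rw [hsym' j k]
    calc (P i j) ^ 2 = (∑ k, P i k * P j k) ^ 2 := by rw [h2]
    _ ≤ (∑ k, (P i k) ^ 2) * ∑ k, (P j k) ^ 2 :=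
        Finset.sum_mul_sq_le_sq_mul_sq _ _ _
    _ = P i i * P j j := by rw [hsum, hsum]
  have key1 : ∀ i, |∑ j, (P i j) ^ 2 * x j| ≤ P i i * Real.sqrt (∑ j, P j j * (x j) ^ 2) := by
    intro i
    have hT : (0:ℝ) ≤ ∑ j, P j j * (x j) ^ 2 :=
      Finset.sum_nonneg fun j _ => mul_nonneg (hpos j).le (sq_nonneg _)
    have hsq : (∑ j, (P i j) ^ 2 * x j) ^ 2 ≤ (P i i)^2 * ∑ j, P j j * (x j) ^ 2 := by
      have rw1 : ∀ j, (P i j) ^ 2 * x j =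
          ((P i j) ^ 2 / Real.sqrt (P j j)) * (Real.sqrt (P j j) * x j) := by
        intro j
        have : Real.sqrt (P j j) ≠ 0 := (Real.sqrt_pos.mpr (hpos j)).ne'
        field_simp
      calc (∑ j, (P i j) ^ 2 * x j) ^ 2
          = (∑ j, ((P i j) ^ 2 / Real.sqrt (P j j)) * (Real.sqrt (P j j) * x j)) ^ 2 := by
            congr 1; exact Finset.sum_congr rfl fun j _ => rw1 j
        _ ≤ (∑ j, ((P i j) ^ 2 / Real.sqrt (P j j)) ^ 2) *
              ∑ j, (Real.sqrt (P j j) * x j) ^ 2 :=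
            Finset.sum_mul_sq_le_sq_mul_sq _ _ _
        _ ≤ (P i i)^2 * ∑ j, P j j * (x j) ^ 2 := by
            have e2 : ∀ j, (Real.sqrt (P j j) * x j) ^ 2 = P j j * (x j) ^ 2 := by
              intro j; rw [mul_pow, Real.sq_sqrt (hpos j).le]
            rw [Finset.sum_congr rfl fun j _ => e2 j]
            refine mul_le_mul ?_ le_rfl hT (sq_nonneg _)
            calc ∑ j, ((P i j) ^ 2 / Real.sqrt (P j j)) ^ 2
                = ∑ j, (P i j) ^ 4 / P j j := by
                  refine Finset.sum_congr rfl fun j _ => ?_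
                  rw [div_pow, Real.sq_sqrt (hpos j).le]; ring_nf
              _ ≤ ∑ j, P i i * (P i j) ^ 2 := by
                  refine Finset.sum_le_sum fun j _ => ?_
                  rw [div_le_iff₀ (hpos j)]
                  calc (P i j) ^ 4 = (P i j)^2 * (P i j)^2 := by ring
                    _ ≤ (P i i * P j j) * (P i j)^2 := by
                        have := hCS i j; nlinarith [sq_nonneg (P i j)]
                    _ = P i i * (P i j) ^ 2 * P j j := by ring
              _ = (P i i) ^ 2 := by rw [← Finset.mul_sum, hsum]; ring
    have habs : |∑ j, (P i j) ^ 2 * x j| ≤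
        Real.sqrt ((P i i)^2 * ∑ j, P j j * (x j) ^ 2) := by
      rw [← Real.sqrt_sq_eq_abs]
      exact Real.sqrt_le_sqrt hsq
    calc |∑ j, (P i j) ^ 2 * x j| ≤ Real.sqrt ((P i i)^2 * ∑ j, P j j * (x j) ^ 2) := habs
      _ = P i i * Real.sqrt (∑ j, P j j * (x j) ^ 2) := by
          rw [Real.sqrt_mul (sq_nonneg _), Real.sqrt_sq (hpos i).le]
  constructor
  · intro i
    rw [abs_mul, abs_inv, abs_of_pos (hpos i), inv_mul_le_iff₀ (hpos i)]
    exact key1 i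
  · intro i
    rw [abs_mul, abs_inv, abs_of_pos (hpos i), inv_mul_le_iff₀ (hpos i)]
    calc |∑ j, (P i j) ^ 2 * x j| ≤ ∑ j, |(P i j) ^ 2 * x j| := Finset.abs_sum_le_sum_abs _ _
      _ ≤ ∑ j, (P i j) ^ 2 * ‖x‖ := by
          refine Finset.sum_le_sum fun j _ => ?_
          rw [abs_mul, abs_of_nonneg (sq_nonneg _)]
          exact mul_le_mul_of_nonneg_left (norm_le_pi_norm x j) (sq_nonneg _)
      _ = P i i * ‖x‖ := by rw [← Finset.sum_mul, hsum]
end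

section
/- For all v ∈ ℝ^n and λ > 0, the potential Φ(v) := Σ_{i=1}^n (exp(λ(v_i − 1)) + exp(−λ(v_i − 1))) satisfies exp(λ‖v − 1‖_∞) ≤ Φ(v) ≤ 2n·exp(λ‖v − 1‖_∞), and moreover λΦ(v) − 2λn ≤ ‖∇Φ(v)‖₁. -/
lemma exp_abs_le' (x : ℝ) : Real.exp |x| ≤ Real.exp x + Real.exp (-x) := by
  rcases abs_cases x with ⟨h, _⟩ | ⟨h, _⟩ <;> rw [h] <;>
    nlinarith [Real.exp_pos x, Real.exp_pos (-x)]

lemma cosh_sub_two_le (a : ℝ) :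
    Real.exp a + Real.exp (-a) - 2 ≤ |Real.exp a - Real.exp (-a)| := by
  rcases le_total a 0 with h | h
  · have h1 : Real.exp a ≤ 1 := Real.exp_le_one_iff.mpr h
    linarith [neg_abs_le (Real.exp a - Real.exp (-a))]
  · have h1 : Real.exp (-a) ≤ 1 := Real.exp_le_one_iff.mpr (by linarith)
    linarith [le_abs_self (Real.exp a - Real.exp (-a))]

/-- Bounds on the soft-max potential `Φ(v) = Σᵢ (e^{λ(vᵢ-1)} + e^{-λ(vᵢ-1)})` and its gradient. -/
theorem stmt3 (n : ℕ) (hn : 0 < n) (lam : ℝ) (hlam : 0 < lam) (v : Fin n → ℝ) :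
    Real.exp (lam * ‖v - 1‖) ≤
      ∑ i, (Real.exp (lam * (v i - 1)) + Real.exp (-(lam * (v i - 1)))) ∧
    ∑ i, (Real.exp (lam * (v i - 1)) + Real.exp (-(lam * (v i - 1)))) ≤
      2 * n * Real.exp (lam * ‖v - 1‖) ∧
    lam * (∑ i, (Real.exp (lam * (v i - 1)) + Real.exp (-(lam * (v i - 1))))) - 2 * lam * n ≤
      ∑ i, |lam * (Real.exp (lam * (v i - 1)) - Real.exp (-(lam * (v i - 1))))| := by
  have : Nonempty (Fin n) := Fin.pos_iff_nonempty.mp hn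
  have hnorm : ∀ i : Fin n, |v i - 1| ≤ ‖v - 1‖ := by
    intro i
    have := norm_le_pi_norm (v - 1) i
    simpa [Real.norm_eq_abs] using this
  refine ⟨?_, ?_, ?_⟩
  · -- lower bound
    obtain ⟨i0, -, hi0⟩ := Finset.exists_max_image Finset.univ (fun i => |v i - 1|) ⟨Classical.arbitrary _, Finset.mem_univ _⟩
    have hle : ‖v - 1‖ ≤ |v i0 - 1| := by
      apply pi_norm_le_iff_of_nonneg (abs_nonneg _) |>.mpr
      intro i
      simpa [Real.norm_eq_abs] using hi0 i (Finset.mem_univ i)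
    calc Real.exp (lam * ‖v - 1‖) ≤ Real.exp (lam * |v i0 - 1|) := by
          apply Real.exp_le_exp.mpr; nlinarith
      _ = Real.exp |lam * (v i0 - 1)| := by rw [abs_mul, abs_of_pos hlam]
      _ ≤ Real.exp (lam * (v i0 - 1)) + Real.exp (-(lam * (v i0 - 1))) := exp_abs_le' _
      _ ≤ _ := by
          apply Finset.single_le_sum (f := fun i => Real.exp (lam * (v i - 1)) + Real.exp (-(lam * (v i - 1)))) (fun i _ => by positivity) (Finset.mem_univ i0)
  · -- upper bound
    calc ∑ i, (Real.exp (lam * (v i - 1)) + Real.exp (-(lam * (v i - 1))))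
        ≤ ∑ _i : Fin n, 2 * Real.exp (lam * ‖v - 1‖) := by
          apply Finset.sum_le_sum
          intro i _
          have h1 : lam * (v i - 1) ≤ lam * ‖v - 1‖ := by
            nlinarith [hnorm i, le_abs_self (v i - 1)]
          have h2 : -(lam * (v i - 1)) ≤ lam * ‖v - 1‖ := by
            nlinarith [hnorm i, neg_abs_le (v i - 1)]
          have := Real.exp_le_exp.mpr h1
          have := Real.exp_le_exp.mpr h2
          linarith
      _ = 2 * n * Real.exp (lam * ‖v - 1‖) := by
          rw [Finset.sum_const, Finset.card_univ, Fintype.card_fin]; ring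
  · -- gradient bound
    have key : ∀ i : Fin n,
        lam * (Real.exp (lam * (v i - 1)) + Real.exp (-(lam * (v i - 1)))) - 2 * lam ≤
        |lam * (Real.exp (lam * (v i - 1)) - Real.exp (-(lam * (v i - 1))))| := by
      intro i
      rw [abs_mul, abs_of_pos hlam]
      have := cosh_sub_two_le (lam * (v i - 1))
      nlinarith
    calc lam * (∑ i, (Real.exp (lam * (v i - 1)) + Real.exp (-(lam * (v i - 1))))) - 2 * lam * n
        = ∑ i : Fin n, (lam * (Real.exp (lam * (v i - 1)) + Real.exp (-(lam * (v i - 1)))) - 2 * lam) := by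
          rw [Finset.sum_sub_distrib, Finset.sum_const, Finset.card_univ, Fintype.card_fin, ← Finset.mul_sum]
          ring
      _ ≤ _ := Finset.sum_le_sum fun i _ => key i
end

section
/- Let τ ∈ ℝ^n_{>0}, and define the mixed norm ‖x‖_{τ+∞} := ‖x‖_∞ + C‖x‖_τ for a constant C > 0, where ‖x‖_τ² = Σ_i τ_i x_i². Let ‖·‖_* be its dual norm. Let Φ(v) = Σ_i (exp(λ(v_i−1)) + exp(−λ(v_i−1))) with λ > 0. If v₀, v₁ ∈ ℝ^n satisfy ‖v₁ − v₀‖_{τ+∞} ≤ δ ≤ 1/(5λ), then Φ(v₁) ≤ Φ(v₀) + δ·e^{δλ}·(‖∇Φ(v₀)‖_* + λn). -/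
/-!
Write `Φ(v) = ∑ᵢ 2 cosh (λ(vᵢ - 1))`. For one coordinate, with `a = λ(v₀ᵢ - 1)` and
`b = λ(v₁ᵢ - v₀ᵢ)`, the addition formula `cosh (a + b) = cosh a cosh b + sinh a sinh b` together
with `cosh a ≤ 1 + |sinh a|` and `cosh b + |sinh b| = e^{|b|}` gives
`cosh (a + b) - cosh a ≤ |b| e^{|b|} (|sinh a| + |b|)`.
Since `|v₁ᵢ - v₀ᵢ| ≤ ‖v₁ - v₀‖_∞ ≤ δ`, summing over `i` leaves a linear term
`e^{λδ} ∑ᵢ |∇Φ(v₀)ᵢ| |v₁ᵢ - v₀ᵢ| ≤ e^{λδ} ‖∇Φ(v₀)‖_* δ` (flipping signs of `v₁ - v₀` to align them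
with `∇Φ(v₀)` does not change the mixed norm) and a quadratic term `2 e^{λδ} λ²δ² n`, which is at
most `e^{λδ} δ λ n` because `λδ ≤ 1/5`.
-/

/-- The mixed norm `‖x‖_{τ+∞} = ‖x‖_∞ + C‖x‖_τ`. -/
noncomputable def mixedNorm (n : ℕ) (τ : Fin n → ℝ) (C : ℝ) (x : Fin n → ℝ) : ℝ :=
  ‖x‖ + C * Real.sqrt (∑ i, τ i * x i ^ 2)

/-- The dual norm of the mixed norm. -/
noncomputable def dualNorm (n : ℕ) (τ : Fin n → ℝ) (C : ℝ) (u : Fin n → ℝ) : ℝ :=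
  sSup {y | ∃ w : Fin n → ℝ, mixedNorm n τ C w ≤ 1 ∧ y = ∑ i, u i * w i}

open Real Finset

section MixedNorm

variable {n : ℕ} {τ : Fin n → ℝ} {C : ℝ}

lemma norm_le_mixedNorm (hC : 0 ≤ C) (x : Fin n → ℝ) : ‖x‖ ≤ mixedNorm n τ C x :=
  le_add_of_nonneg_right (by positivity)

lemma mixedNorm_nonneg (hC : 0 ≤ C) (x : Fin n → ℝ) : 0 ≤ mixedNorm n τ C x :=
  (norm_nonneg x).trans (norm_le_mixedNorm hC x)

lemma abs_le_mixedNorm (hC : 0 ≤ C) (x : Fin n → ℝ) (i : Fin n) : |x i| ≤ mixedNorm n τ C x :=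
  (norm_le_pi_norm x i).trans (norm_le_mixedNorm hC x)

lemma mixedNorm_smul (c : ℝ) (x : Fin n → ℝ) :
    mixedNorm n τ C (c • x) = |c| * mixedNorm n τ C x := by
  have hsum : ∑ i, τ i * (c • x) i ^ 2 = c ^ 2 * ∑ i, τ i * x i ^ 2 := by
    rw [mul_sum]
    exact sum_congr rfl fun i _ => by rw [Pi.smul_apply, smul_eq_mul]; ring
  simp only [mixedNorm, norm_smul, hsum, sqrt_mul (sq_nonneg c), sqrt_sq_eq_abs, Real.norm_eq_abs]
  ring

lemma mixedNorm_congr_abs {x y : Fin n → ℝ} (h : ∀ i, |x i| = |y i|) :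
    mixedNorm n τ C x = mixedNorm n τ C y := by
  have hnorm : ‖x‖ = ‖y‖ := by
    rw [Pi.norm_def, Pi.norm_def]
    congr 2
    funext i
    exact NNReal.eq (by simpa using h i)
  have hsq : ∀ i, x i ^ 2 = y i ^ 2 := fun i => by rw [← sq_abs, h, sq_abs]
  simp only [mixedNorm, hnorm, hsq]

lemma bddAbove_dualNorm_set (hC : 0 ≤ C) (u : Fin n → ℝ) :
    BddAbove {y | ∃ w : Fin n → ℝ, mixedNorm n τ C w ≤ 1 ∧ y = ∑ i, u i * w i} := by
  refine ⟨∑ i, |u i|, ?_⟩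
  rintro y ⟨w, hw, rfl⟩
  refine sum_le_sum fun i _ => ?_
  calc u i * w i ≤ |u i| * |w i| := by rw [← abs_mul]; exact le_abs_self _
    _ ≤ |u i| * 1 := by gcongr; exact (abs_le_mixedNorm hC w i).trans hw
    _ = |u i| := mul_one _

lemma dualNorm_nonneg (hC : 0 ≤ C) (u : Fin n → ℝ) : 0 ≤ dualNorm n τ C u :=
  le_csSup (bddAbove_dualNorm_set hC u) ⟨0, by simp [mixedNorm], by simp⟩

lemma sum_mul_le_dualNorm_mul_mixedNorm (hC : 0 ≤ C) (u w : Fin n → ℝ) :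
    ∑ i, u i * w i ≤ dualNorm n τ C u * mixedNorm n τ C w := by
  rcases (mixedNorm_nonneg (τ := τ) hC w).eq_or_lt with hzero | hpos
  · have : w = 0 := norm_le_zero_iff.mp (hzero ▸ norm_le_mixedNorm hC w)
    simp [this, mixedNorm]
  · set N := mixedNorm n τ C w
    have hunit : mixedNorm n τ C (N⁻¹ • w) ≤ 1 := by
      rw [mixedNorm_smul, abs_inv, abs_of_pos hpos, inv_mul_cancel₀ hpos.ne']
    have hmem : N⁻¹ * ∑ i, u i * w i ≤ dualNorm n τ C u :=
      le_csSup (bddAbove_dualNorm_set hC u)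
        ⟨N⁻¹ • w, hunit, by simp only [mul_sum, Pi.smul_apply, smul_eq_mul]; ring_nf⟩
    rw [mul_comm]
    exact (inv_mul_le_iff₀ hpos).mp hmem

lemma sum_abs_mul_le_dualNorm_mul_mixedNorm (hC : 0 ≤ C) (u w : Fin n → ℝ) :
    ∑ i, |u i| * |w i| ≤ dualNorm n τ C u * mixedNorm n τ C w := by
  set w' : Fin n → ℝ := fun i => if 0 ≤ u i then |w i| else -|w i|
  have habs : ∀ i, |w' i| = |w i| := fun i => by
    simp only [w']; split_ifs <;> simp
  have hpair : ∑ i, u i * w' i = ∑ i, |u i| * |w i| := sum_congr rfl fun i _ => by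
    simp only [w']
    split_ifs with h
    · rw [abs_of_nonneg h]
    · rw [abs_of_neg (not_le.mp h)]; ring
  rw [← hpair, ← mixedNorm_congr_abs (τ := τ) (C := C) habs]
  exact sum_mul_le_dualNorm_mul_mixedNorm hC u w'

end MixedNorm

lemma exp_sub_one_le_mul_exp (t : ℝ) : exp t - 1 ≤ t * exp t := by
  have hinv : exp t * exp (-t) = 1 := by rw [← exp_add, add_neg_cancel, exp_zero]
  linarith [mul_le_mul_of_nonneg_left (one_sub_le_exp_neg t) (exp_pos t).le]

lemma cosh_sub_one_le_sq_mul_exp_abs (b : ℝ) : cosh b - 1 ≤ b ^ 2 / 2 * exp |b| := by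
  rw [← cosh_abs, ← sq_abs]
  set t := |b|
  have hinv : exp t * exp (-t) = 1 := by rw [← exp_add, add_neg_cancel, exp_zero]
  have hsq : 2 * exp t * (cosh t - 1) = (exp t - 1) ^ 2 := by
    rw [cosh_eq]; linear_combination hinv
  have hle : (exp t - 1) ^ 2 ≤ (t * exp t) ^ 2 :=
    pow_le_pow_left₀ (sub_nonneg.mpr (one_le_exp (abs_nonneg b))) (exp_sub_one_le_mul_exp t) 2
  nlinarith [exp_pos t]

lemma cosh_add_sub_cosh_le (a b : ℝ) :
    cosh (a + b) - cosh a ≤ |b| * exp |b| * (|sinh a| + |b|) := by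
  have hcosh : cosh a ≤ 1 + |sinh a| := by
    nlinarith [cosh_sq a, sq_abs (sinh a), abs_nonneg (sinh a), cosh_pos a]
  have hexp : cosh b + |sinh b| = exp |b| := by rw [abs_sinh, ← cosh_abs, cosh_add_sinh]
  have hb := cosh_sub_one_le_sq_mul_exp_abs b
  have hsinh : sinh a * sinh b ≤ |sinh a| * |sinh b| := by rw [← abs_mul]; exact le_abs_self _
  have hcoshb : 0 ≤ cosh b - 1 := sub_nonneg.mpr (one_le_cosh b)
  calc cosh (a + b) - cosh a = cosh a * (cosh b - 1) + sinh a * sinh b := by rw [cosh_add]; ring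
    _ ≤ (1 + |sinh a|) * (cosh b - 1) + |sinh a| * |sinh b| := by gcongr
    _ = (cosh b - 1) + |sinh a| * (exp |b| - 1) := by rw [← hexp]; ring
    _ ≤ b ^ 2 / 2 * exp |b| + |sinh a| * (|b| * exp |b|) := by
      gcongr; exact exp_sub_one_le_mul_exp _
    _ ≤ |b| * exp |b| * (|sinh a| + |b|) := by
      rw [← sq_abs b]; nlinarith [exp_pos |b|, sq_nonneg |b|]

lemma exp_add_exp_neg_le {lam δ x y : ℝ} (hlam : 0 ≤ lam) (hxy : |y - x| ≤ δ) :
    exp (lam * (y - 1)) + exp (-(lam * (y - 1))) ≤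
      exp (lam * (x - 1)) + exp (-(lam * (x - 1))) +
        exp (δ * lam) * (|lam * (exp (lam * (x - 1)) - exp (-(lam * (x - 1))))| * |y - x| +
          2 * lam ^ 2 * δ ^ 2) := by
  set a := lam * (x - 1)
  have hb : |lam * (y - x)| = lam * |y - x| := by rw [abs_mul, abs_of_nonneg hlam]
  have hcosh := cosh_add_sub_cosh_le a (lam * (y - x))
  rw [show a + lam * (y - x) = lam * (y - 1) by ring, hb] at hcosh
  have hexp : exp (lam * |y - x|) ≤ exp (δ * lam) := exp_le_exp.mpr (by nlinarith)
  have hgrad : |lam * (exp a - exp (-a))| = 2 * lam * |sinh a| := by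
    rw [sinh_eq, abs_mul, abs_of_nonneg hlam, abs_div, abs_two]; ring
  have hpot (z : ℝ) : exp z + exp (-z) = 2 * cosh z := by rw [cosh_eq]; ring
  rw [hgrad, hpot, hpot]
  have hquad : (lam * |y - x|) ^ 2 ≤ (lam * δ) ^ 2 := by gcongr
  calc 2 * cosh (lam * (y - 1))
      ≤ 2 * cosh a +
          2 * exp (lam * |y - x|) * (lam * |sinh a| * |y - x| + (lam * |y - x|) ^ 2) := by
        linarith
    _ ≤ 2 * cosh a + 2 * exp (δ * lam) * (lam * |sinh a| * |y - x| + (lam * δ) ^ 2) := by gcongr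
    _ = 2 * cosh a + exp (δ * lam) * (2 * lam * |sinh a| * |y - x| + 2 * lam ^ 2 * δ ^ 2) := by
        ring

theorem stmt4_general (n : ℕ) (τ : Fin n → ℝ) (C : ℝ) (hC : 0 < C)
    (lam : ℝ) (hlam : 0 < lam) (δ : ℝ) (v₀ v₁ : Fin n → ℝ)
    (hmove : mixedNorm n τ C (v₁ - v₀) ≤ δ) (hδ : δ ≤ 1 / (5 * lam)) :
    ∑ i, (Real.exp (lam * (v₁ i - 1)) + Real.exp (-(lam * (v₁ i - 1)))) ≤
      ∑ i, (Real.exp (lam * (v₀ i - 1)) + Real.exp (-(lam * (v₀ i - 1)))) +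
        δ * Real.exp (δ * lam) *
          (dualNorm n τ C
              (fun i => lam * (Real.exp (lam * (v₀ i - 1)) - Real.exp (-(lam * (v₀ i - 1))))) +
            lam * n) := by
  set u : Fin n → ℝ := fun i => lam * (exp (lam * (v₀ i - 1)) - exp (-(lam * (v₀ i - 1))))
  set D := dualNorm n τ C u
  have hδ0 : 0 ≤ δ := (mixedNorm_nonneg hC.le _).trans hmove
  have hcoord (i : Fin n) : |v₁ i - v₀ i| ≤ δ := (abs_le_mixedNorm hC.le (v₁ - v₀) i).trans hmove
  have hpair : ∑ i, |u i| * |v₁ i - v₀ i| ≤ D * δ :=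
    (sum_abs_mul_le_dualNorm_mul_mixedNorm hC.le u (v₁ - v₀)).trans
      (mul_le_mul_of_nonneg_left hmove (dualNorm_nonneg hC.le u))
  have hquad : 2 * lam ^ 2 * δ ^ 2 * n ≤ δ * (lam * n) := by
    have h5 : δ * (5 * lam) ≤ 1 := (le_div_iff₀ (by positivity)).mp hδ
    have : 0 ≤ lam * δ * n := by positivity
    nlinarith
  calc ∑ i, (exp (lam * (v₁ i - 1)) + exp (-(lam * (v₁ i - 1))))
      ≤ ∑ i, (exp (lam * (v₀ i - 1)) + exp (-(lam * (v₀ i - 1))) +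
          exp (δ * lam) * (|u i| * |v₁ i - v₀ i| + 2 * lam ^ 2 * δ ^ 2)) :=
        sum_le_sum fun i _ => exp_add_exp_neg_le hlam.le (hcoord i)
    _ = ∑ i, (exp (lam * (v₀ i - 1)) + exp (-(lam * (v₀ i - 1)))) +
          exp (δ * lam) * (∑ i, |u i| * |v₁ i - v₀ i| + 2 * lam ^ 2 * δ ^ 2 * n) := by
        simp only [sum_add_distrib, ← mul_sum, sum_const, card_univ, Fintype.card_fin,
          nsmul_eq_mul]
        ring
    _ ≤ ∑ i, (exp (lam * (v₀ i - 1)) + exp (-(lam * (v₀ i - 1)))) +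
          exp (δ * lam) * (D * δ + δ * (lam * n)) := by gcongr
    _ = _ := by ring

/-- Potential increase: if `v₁` is within mixed-norm distance `δ ≤ 1/(5λ)` of `v₀`, then
`Φ(v₁) ≤ Φ(v₀) + δ e^{δλ}(‖∇Φ(v₀)‖_* + λn)`. -/
theorem stmt4 (n : ℕ) (τ : Fin n → ℝ) (hτ : ∀ i, 0 < τ i) (C : ℝ) (hC : 0 < C)
    (lam : ℝ) (hlam : 0 < lam) (δ : ℝ) (v₀ v₁ : Fin n → ℝ)
    (hmove : mixedNorm n τ C (v₁ - v₀) ≤ δ) (hδ : δ ≤ 1 / (5 * lam)) :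
    ∑ i, (Real.exp (lam * (v₁ i - 1)) + Real.exp (-(lam * (v₁ i - 1)))) ≤
      ∑ i, (Real.exp (lam * (v₀ i - 1)) + Real.exp (-(lam * (v₀ i - 1)))) +
        δ * Real.exp (δ * lam) *
          (dualNorm n τ C
              (fun i => lam * (Real.exp (lam * (v₀ i - 1)) - Real.exp (-(lam * (v₀ i - 1))))) +
            lam * n) :=
  stmt4_general n τ C hC lam hlam δ v₀ v₁ hmove hδ
end

section
/- Let H ∈ ℝ^{d×d} be symmetric positive definite, b ∈ ℝ^d, and v ∈ ℝ^d with ‖v‖_{H^{-1}} ≤ ε‖b‖_{H^{-1}} for 0 ≤ ε ≤ 1/80. Let y = H^{-1}(b + v). Then there exists a symmetric matrix Δ ∈ ℝ^{d×d} such that y = (H + Δ)^{-1} b and e^{-20ε} H ⪯ H + Δ ⪯ e^{20ε} H. -/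
/-!
With `z = b + v = H y`, it suffices to find a symmetric `Δ` with `Δ y = -v`. Writing
`Q = zᵀy = ‖z‖²_{H⁻¹}`, the rank-two matrix `Δ = (vᵀy / Q²) z zᵀ - (v zᵀ + z vᵀ) / Q` does this.
Cauchy–Schwarz for `H` and `H⁻¹` bounds its quadratic form:
`|xᵀΔx| ≤ 3 (‖v‖_{H⁻¹} / ‖z‖_{H⁻¹}) ‖x‖²_H`. The triangle inequality `‖b‖ ≤ ‖z‖ + ‖v‖` turns
the hypothesis into `(1 - ε) ‖v‖_{H⁻¹} ≤ ε ‖z‖_{H⁻¹}`, so `|xᵀΔx| ≤ 4ε ‖x‖²_H`, well inside the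
window `e^{±20ε}`.
-/

open Matrix

variable {n : Type*} [Fintype n]

theorem Matrix.IsSymm.dotProduct_mulVec_comm {R : Type*} [CommSemiring R] {M : Matrix n n R}
    (hM : M.IsSymm) (x y : n → R) : x ⬝ᵥ M *ᵥ y = y ⬝ᵥ M *ᵥ x := by
  rw [dotProduct_mulVec, ← mulVec_transpose, hM.eq, dotProduct_comm]

namespace Matrix.PosSemidef

variable {M : Matrix n n ℝ}

theorem sq_dotProduct_mulVec_le (hM : M.PosSemidef) (x y : n → ℝ) :
    (x ⬝ᵥ M *ᵥ y) ^ 2 ≤ (x ⬝ᵥ M *ᵥ x) * (y ⬝ᵥ M *ᵥ y) := by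
  let := M.toSeminormedAddCommGroup hM
  let := M.toInnerProductSpace hM
  have h := real_inner_mul_inner_self_le x y
  change (M *ᵥ y) ⬝ᵥ star x * ((M *ᵥ y) ⬝ᵥ star x) ≤
    ((M *ᵥ x) ⬝ᵥ star x) * ((M *ᵥ y) ⬝ᵥ star y) at h
  simpa only [star_trivial, dotProduct_comm (M *ᵥ _), sq] using h

theorem sqrt_dotProduct_mulVec_sub_le (hM : M.PosSemidef) (x y : n → ℝ) :
    √((x - y) ⬝ᵥ M *ᵥ (x - y)) ≤ √(x ⬝ᵥ M *ᵥ x) + √(y ⬝ᵥ M *ᵥ y) := by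
  have hx : 0 ≤ x ⬝ᵥ M *ᵥ x := by simpa using hM.dotProduct_mulVec_nonneg x
  have hy : 0 ≤ y ⬝ᵥ M *ᵥ y := by simpa using hM.dotProduct_mulVec_nonneg y
  have hxy : -(x ⬝ᵥ M *ᵥ y) ≤ √(x ⬝ᵥ M *ᵥ x) * √(y ⬝ᵥ M *ᵥ y) := by
    rw [← Real.sqrt_mul hx]
    exact (neg_le_abs _).trans (Real.abs_le_sqrt (hM.sq_dotProduct_mulVec_le x y))
  have hexpand : (x - y) ⬝ᵥ M *ᵥ (x - y) =
      x ⬝ᵥ M *ᵥ x - 2 * (x ⬝ᵥ M *ᵥ y) + y ⬝ᵥ M *ᵥ y := by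
    have hMs : M.IsSymm := isHermitian_iff_isSymm.mp hM.isHermitian
    simp only [mulVec_sub, dotProduct_sub, sub_dotProduct, hMs.dotProduct_mulVec_comm y x]
    ring
  rw [Real.sqrt_le_left (by positivity), add_sq, Real.sq_sqrt hx, Real.sq_sqrt hy]
  linarith

theorem one_sub_mul_sqrt_le_of_sqrt_le (hM : M.PosSemidef) {b v : n → ℝ} {ε : ℝ}
    (hv : √(v ⬝ᵥ M *ᵥ v) ≤ ε * √(b ⬝ᵥ M *ᵥ b)) (hε0 : 0 ≤ ε) :
    (1 - ε) * √(v ⬝ᵥ M *ᵥ v) ≤ ε * √((b + v) ⬝ᵥ M *ᵥ (b + v)) := by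
  have h := hM.sqrt_dotProduct_mulVec_sub_le (b + v) v
  rw [add_sub_cancel_right] at h
  nlinarith

end Matrix.PosSemidef

theorem Matrix.PosDef.sq_dotProduct_le [DecidableEq n] {H : Matrix n n ℝ} (hH : H.PosDef)
    (u x : n → ℝ) : (u ⬝ᵥ x) ^ 2 ≤ (u ⬝ᵥ H⁻¹ *ᵥ u) * (x ⬝ᵥ H *ᵥ x) := by
  have h := hH.posSemidef.sq_dotProduct_mulVec_le x (H⁻¹ *ᵥ u)
  rw [mulVec_mulVec, mul_nonsing_inv _ ((isUnit_iff_isUnit_det H).mp hH.isUnit),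
    one_mulVec] at h
  rwa [dotProduct_comm x, dotProduct_comm (H⁻¹ *ᵥ u), mul_comm] at h

theorem posSemidef_sub_of_forall_dotProduct_mulVec_le {A B : Matrix n n ℝ} (hA : A.IsSymm)
    (hB : B.IsSymm) (h : ∀ x, x ⬝ᵥ A *ᵥ x ≤ x ⬝ᵥ B *ᵥ x) : (B - A).PosSemidef :=
  .of_dotProduct_mulVec_nonneg (isHermitian_iff_isSymm.mpr (hB.sub hA)) fun x => by
    simpa [sub_mulVec] using h x

theorem posSemidef_add_sub_smul_of_abs_le {H Δ : Matrix n n ℝ} (hH : H.PosSemidef)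
    (hΔ : Δ.IsSymm) {δ lo hi : ℝ} (hbound : ∀ x, |x ⬝ᵥ Δ *ᵥ x| ≤ δ * (x ⬝ᵥ H *ᵥ x))
    (hlo : lo ≤ 1 - δ) (hhi : 1 + δ ≤ hi) :
    (H + Δ - lo • H).PosSemidef ∧ (hi • H - (H + Δ)).PosSemidef := by
  have hHs : H.IsSymm := isHermitian_iff_isSymm.mp hH.isHermitian
  have hP x : 0 ≤ x ⬝ᵥ H *ᵥ x := by simpa using hH.dotProduct_mulVec_nonneg x
  constructor
  · refine posSemidef_sub_of_forall_dotProduct_mulVec_le (hHs.smul lo) (hHs.add hΔ) fun x => ?_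
    simp only [add_mulVec, smul_mulVec, dotProduct_add, dotProduct_smul, smul_eq_mul]
    linarith [(abs_le.mp (hbound x)).1, mul_le_mul_of_nonneg_right hlo (hP x)]
  · refine posSemidef_sub_of_forall_dotProduct_mulVec_le (hHs.add hΔ) (hHs.smul hi) fun x => ?_
    simp only [add_mulVec, smul_mulVec, dotProduct_add, dotProduct_smul, smul_eq_mul]
    linarith [(abs_le.mp (hbound x)).2, mul_le_mul_of_nonneg_right hhi (hP x)]

section RankTwo

variable {K : Type*} [Field K]

def rankTwoCorrection (z y u : n → K) : Matrix n n K :=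
  ((u ⬝ᵥ y) / (z ⬝ᵥ y) ^ 2) • vecMulVec z z - (z ⬝ᵥ y)⁻¹ • (vecMulVec u z + vecMulVec z u)

theorem rankTwoCorrection_isSymm (z y u : n → K) : (rankTwoCorrection z y u).IsSymm := by
  refine IsSymm.sub (IsSymm.smul ?_ _) (IsSymm.smul ?_ _)
  · exact transpose_vecMulVec z z
  · rw [IsSymm, transpose_add, transpose_vecMulVec, transpose_vecMulVec, add_comm]

theorem rankTwoCorrection_mulVec {z y : n → K} (h : z ⬝ᵥ y ≠ 0) (u : n → K) :
    rankTwoCorrection z y u *ᵥ y = -u := by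
  ext i
  simp only [rankTwoCorrection, sub_mulVec, add_mulVec, smul_mulVec, vecMulVec_mulVec,
    op_smul_eq_smul, Pi.sub_apply, Pi.smul_apply, Pi.add_apply, Pi.neg_apply, smul_eq_mul]
  field_simp
  ring

theorem dotProduct_rankTwoCorrection_mulVec (z y u x : n → K) :
    x ⬝ᵥ rankTwoCorrection z y u *ᵥ x =
      (u ⬝ᵥ y) / (z ⬝ᵥ y) ^ 2 * (z ⬝ᵥ x) ^ 2 - 2 * (u ⬝ᵥ x) * (z ⬝ᵥ x) / (z ⬝ᵥ y) := by
  simp only [rankTwoCorrection, sub_mulVec, add_mulVec, smul_mulVec, vecMulVec_mulVec,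
    op_smul_eq_smul, dotProduct_sub, dotProduct_add, dotProduct_smul, smul_eq_mul]
  rw [dotProduct_comm x z, dotProduct_comm x u]
  ring

end RankTwo

theorem abs_dotProduct_rankTwoCorrection_mulVec_le [DecidableEq n] {H : Matrix n n ℝ}
    (hH : H.PosDef) (z u x : n → ℝ) :
    |x ⬝ᵥ rankTwoCorrection z (H⁻¹ *ᵥ z) u *ᵥ x| ≤
      3 * (√(u ⬝ᵥ H⁻¹ *ᵥ u) / √(z ⬝ᵥ H⁻¹ *ᵥ z)) * (x ⬝ᵥ H *ᵥ x) := by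
  have hHinv := hH.inv.posSemidef
  have hP : 0 ≤ x ⬝ᵥ H *ᵥ x := by simpa using hH.posSemidef.dotProduct_mulVec_nonneg x
  have hν : 0 ≤ u ⬝ᵥ H⁻¹ *ᵥ u := by simpa using hHinv.dotProduct_mulVec_nonneg u
  have hQ0 : 0 ≤ z ⬝ᵥ H⁻¹ *ᵥ z := by simpa using hHinv.dotProduct_mulVec_nonneg z
  have hc : |u ⬝ᵥ H⁻¹ *ᵥ z| ≤ √(u ⬝ᵥ H⁻¹ *ᵥ u) * √(z ⬝ᵥ H⁻¹ *ᵥ z) := by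
    rw [← Real.sqrt_mul hν]
    exact Real.abs_le_sqrt (hHinv.sq_dotProduct_mulVec_le u z)
  have ht : |u ⬝ᵥ x| ≤ √(u ⬝ᵥ H⁻¹ *ᵥ u) * √(x ⬝ᵥ H *ᵥ x) := by
    rw [← Real.sqrt_mul hν]
    exact Real.abs_le_sqrt (hH.sq_dotProduct_le u x)
  have hs := hH.sq_dotProduct_le z x
  rw [dotProduct_rankTwoCorrection_mulVec]
  set Q := z ⬝ᵥ H⁻¹ *ᵥ z
  set P := x ⬝ᵥ H *ᵥ x
  set ν := u ⬝ᵥ H⁻¹ *ᵥ u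
  rcases (Real.sqrt_nonneg Q).eq_or_lt with hq | hq
  · simp [le_antisymm (Real.sqrt_eq_zero'.mp hq.symm) hQ0]
  set q := √Q
  rw [show Q = q ^ 2 from (Real.sq_sqrt hQ0).symm] at hs ⊢
  have hs' : |z ⬝ᵥ x| ≤ q * √P := by
    rw [← Real.sqrt_sq hq.le, ← Real.sqrt_mul (sq_nonneg q)]
    exact Real.abs_le_sqrt hs
  calc _ ≤ |u ⬝ᵥ H⁻¹ *ᵥ z| / (q ^ 2) ^ 2 * |z ⬝ᵥ x| ^ 2 + 2 * |u ⬝ᵥ x| * |z ⬝ᵥ x| / q ^ 2 :=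
        (abs_sub _ _).trans_eq (by simp only [abs_mul, abs_div, abs_pow, abs_two, sq_abs])
    _ ≤ √ν * q / (q ^ 2) ^ 2 * (q * √P) ^ 2 + 2 * (√ν * √P) * (q * √P) / q ^ 2 := by gcongr
    _ = 3 * (√ν / q) * P := by
        field_simp
        rw [Real.sq_sqrt hP]
        ring

theorem three_mul_div_le_four_mul {a q ε : ℝ} (ha : 0 ≤ a) (hε0 : 0 ≤ ε) (hε : ε ≤ 1 / 4)
    (h : (1 - ε) * a ≤ ε * q) : 3 * (a / q) ≤ 4 * ε := by
  rcases le_or_gt q 0 with hq | hq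
  · linarith [div_nonpos_of_nonneg_of_nonpos ha hq]
  rw [mul_div_assoc', div_le_iff₀ hq]
  nlinarith [mul_nonneg (by linarith : 0 ≤ 1 - 4 * ε) ha]

theorem exp_neg_twenty_mul_le_one_sub {ε : ℝ} (hε0 : 0 ≤ ε) (hε : ε ≤ 1 / 5) :
    Real.exp (-(20 * ε)) ≤ 1 - 4 * ε := by
  rw [Real.exp_neg, inv_le_iff_one_le_mul₀ (Real.exp_pos _)]
  nlinarith [Real.add_one_le_exp (20 * ε)]

/-- Solving a perturbed linear system can be viewed as solving with a spectrally close matrix. -/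
theorem stmt5 (d : ℕ) (H : Matrix (Fin d) (Fin d) ℝ) (hH : H.PosDef)
    (b v : Fin d → ℝ) (ε : ℝ) (hε0 : 0 ≤ ε) (hε : ε ≤ 1/80)
    (hv : Real.sqrt (v ⬝ᵥ (H⁻¹ *ᵥ v)) ≤ ε * Real.sqrt (b ⬝ᵥ (H⁻¹ *ᵥ b))) :
    ∃ Δ : Matrix (Fin d) (Fin d) ℝ, Δ.IsSymm ∧
      (H + Δ).PosDef ∧
      ((H + Δ) - Real.exp (-(20 * ε)) • H).PosSemidef ∧
      (Real.exp (20 * ε) • H - (H + Δ)).PosSemidef ∧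
      H⁻¹ *ᵥ (b + v) = (H + Δ)⁻¹ *ᵥ b := by
  set z := b + v
  have hνQ := hH.inv.posSemidef.one_sub_mul_sqrt_le_of_sqrt_le hv hε0
  have hratio := three_mul_div_le_four_mul (Real.sqrt_nonneg _) hε0 (by linarith) hνQ
  set Δ := rankTwoCorrection z (H⁻¹ *ᵥ z) v
  obtain ⟨hlo, hhi⟩ := posSemidef_add_sub_smul_of_abs_le hH.posSemidef
    (rankTwoCorrection_isSymm _ _ _)
    (fun x => (abs_dotProduct_rankTwoCorrection_mulVec_le hH z v x).trans
      (mul_le_mul_of_nonneg_right hratio (by simpa using hH.posSemidef.dotProduct_mulVec_nonneg x)))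
    (exp_neg_twenty_mul_le_one_sub hε0 (by linarith))
    (show 1 + 4 * ε ≤ Real.exp (20 * ε) by linarith [Real.add_one_le_exp (20 * ε)])
  have hpd : (H + Δ).PosDef := by
    simpa using (hH.smul (Real.exp_pos (-(20 * ε)))).add_posSemidef hlo
  have hΔy : Δ *ᵥ (H⁻¹ *ᵥ z) = -v := by
    by_cases hv0 : v = 0
    · simp [Δ, rankTwoCorrection, hv0]
    refine rankTwoCorrection_mulVec (fun hQ => ?_) v
    have hν : 0 < v ⬝ᵥ H⁻¹ *ᵥ v := by simpa using hH.inv.dotProduct_mulVec_pos hv0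
    rw [hQ, Real.sqrt_zero] at hνQ
    nlinarith [Real.sqrt_pos.mpr hν]
  have hy : (H + Δ) *ᵥ (H⁻¹ *ᵥ z) = b := by
    rw [add_mulVec, hΔy, mulVec_mulVec, mul_nonsing_inv _ ((isUnit_iff_isUnit_det H).mp hH.isUnit),
      one_mulVec, ← sub_eq_add_neg, add_sub_cancel_right]
  let := hpd.isUnit.invertible
  exact ⟨Δ, rankTwoCorrection_isSymm _ _ _, hpd, hlo, hhi, (inv_mulVec_eq_vec hy.symm).symm⟩
end

section
/- Let M ∈ ℝ^{d×d} be positive definite and let M', N ∈ ℝ^{d×d} satisfy (1−ε)M ⪯ M' ⪯ (1+ε)M for ε ≤ 1/8 and (7/8)N ⪯ M^{-1} ⪯ (8/7)N. Then ‖I − NM'‖_M ≤ 2/5, where ‖B‖_M := ‖M^{1/2} B M^{-1/2}‖₂ is the operator norm induced by the M-norm. -/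
/-!
With `S = M^{1/2}`, conjugation turns `I - N M'` into `I - P Q` for the symmetric matrices
`P = S N S` and `Q = S⁻¹ M' S⁻¹`. The Loewner hypotheses become the spectral bounds
`P ∈ [7/8, 8/7]` and `Q ∈ [1 - ε, 1 + ε]`, hence `‖1 - P‖ ≤ 1/7`, `‖P‖ ≤ 8/7` and `‖1 - Q‖ ≤ 1/8`,
and `1 - P Q = (1 - P) + P (1 - Q)` gives `‖I - N M'‖_M ≤ 1/7 + 8/7 · 1/8 = 2/7 ≤ 2/5`.
-/

open Matrix

/-- The square root of a positive semidefinite matrix, as defined in the older Mathlib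
(`Matrix.PosSemidef.sqrt`, since removed in favour of `CFC.sqrt`). -/
noncomputable def Matrix.PosSemidef.sqrt {n : Type*} [Fintype n] [DecidableEq n]
    {A : Matrix n n ℝ} (hA : A.PosSemidef) : Matrix n n ℝ :=
  (hA.1.eigenvectorUnitary : Matrix n n ℝ) * diagonal (fun i => Real.sqrt (hA.1.eigenvalues i)) *
    (star hA.1.eigenvectorUnitary : Matrix n n ℝ)

open scoped MatrixOrder Matrix.Norms.L2Operator

section Order

variable {A : Type*} [Ring A] [StarRing A] [PartialOrder A] [StarOrderedRing A] [Algebra ℝ A]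

theorem IsSelfAdjoint.conjugate_mem_Icc_algebraMap {s x y : A} (hs : IsSelfAdjoint s)
    (hy : s * y * s = 1) {a b : ℝ} (ha : a • y ≤ x) (hb : x ≤ b • y) :
    s * x * s ∈ Set.Icc (algebraMap ℝ A a) (algebraMap ℝ A b) := by
  have hconj (c : ℝ) : s * (c • y) * s = algebraMap ℝ A c := by
    rw [mul_smul_comm, smul_mul_assoc, hy, Algebra.algebraMap_eq_smul_one]
  exact ⟨hconj a ▸ hs.conjugate_le_conjugate ha, hconj b ▸ hs.conjugate_le_conjugate hb⟩

end Order

section Norm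

variable {A : Type*} [NormedRing A] [StarRing A] [NormedAlgebra ℝ A] [PartialOrder A]
  [StarOrderedRing A] [IsometricContinuousFunctionalCalculus ℝ A IsSelfAdjoint]
  [StarModule ℝ A] [NonnegSpectrumClass ℝ A]

theorem norm_algebraMap_sub_le_of_mem_Icc {p : A} {a b c δ : ℝ} (hδ : 0 ≤ δ)
    (hp : p ∈ Set.Icc (algebraMap ℝ A a) (algebraMap ℝ A b)) (hac : c - δ ≤ a)
    (hbc : b ≤ c + δ) : ‖algebraMap ℝ A c - p‖ ≤ δ := by
  have hsa : IsSelfAdjoint p := by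
    simpa using (IsSelfAdjoint.of_nonneg (sub_nonneg.mpr hp.1)).add (.algebraMap A (.all a))
  have hlo := (algebraMap_le_iff_le_spectrum hsa).mp hp.1
  have hhi := (le_algebraMap_iff_spectrum_le hsa).mp hp.2
  rw [show algebraMap ℝ A c - p = cfc (fun x => c - x) p by
    rw [cfc_sub (fun _ => c) (fun x => x) p, cfc_const c p, cfc_id' ℝ p]]
  exact norm_cfc_le hδ fun x hx => abs_le.mpr ⟨by linarith [hhi x hx], by linarith [hlo x hx]⟩

end Norm

theorem norm_one_sub_mul_le {R : Type*} [SeminormedRing R] (p q : R) :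
    ‖1 - p * q‖ ≤ ‖1 - p‖ + ‖p‖ * ‖1 - q‖ := by
  calc ‖1 - p * q‖ = ‖(1 - p) + p * (1 - q)‖ := by noncomm_ring
    _ ≤ ‖1 - p‖ + ‖p‖ * ‖1 - q‖ := (norm_add_le _ _).trans (by gcongr; exact norm_mul_le _ _)

namespace Matrix

theorem sqrt_sum_sq_mulVec_le_of_l2_opNorm_le {m n : Type*} [Fintype m] [Fintype n]
    [DecidableEq n] {B : Matrix m n ℝ} {c : ℝ} (hB : ‖B‖ ≤ c) (x : n → ℝ) :
    √(∑ i, (B *ᵥ x) i ^ 2) ≤ c * √(∑ i, x i ^ 2) := by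
  have h := B.l2_opNorm_mulVec (WithLp.toLp 2 x)
  simp only [EuclideanSpace.norm_eq, Real.norm_eq_abs, sq_abs] at h
  exact h.trans (by gcongr)

variable {n : Type*} [Fintype n] [DecidableEq n] {A : Matrix n n ℝ}

theorem PosSemidef.sqrt_eq_cfcSqrt (hA : A.PosSemidef) : hA.sqrt = CFC.sqrt A := by
  rw [CFC.sqrt_eq_real_sqrt A hA.nonneg, cfcₙ_eq_cfc, hA.1.cfc_eq]
  simp [IsHermitian.cfc, PosSemidef.sqrt, Unitary.conjStarAlgAut_apply, Function.comp_def]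

theorem PosSemidef.isHermitian_sqrt (hA : A.PosSemidef) : hA.sqrt.IsHermitian :=
  hA.sqrt_eq_cfcSqrt ▸ (CFC.sqrt_nonneg A).isSelfAdjoint

theorem PosSemidef.sqrt_mul_sqrt (hA : A.PosSemidef) : hA.sqrt * hA.sqrt = A :=
  hA.sqrt_eq_cfcSqrt ▸ CFC.sqrt_mul_sqrt_self A hA.nonneg

theorem PosDef.isUnit_det_sqrt (hA : A.PosDef) : IsUnit hA.posSemidef.sqrt.det :=
  isUnit_of_mul_isUnit_left <| by
    rw [← det_mul, hA.posSemidef.sqrt_mul_sqrt]; exact (isUnit_iff_isUnit_det A).mp hA.isUnit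

theorem PosDef.sqrt_mul_inv_mul_sqrt (hA : A.PosDef) :
    hA.posSemidef.sqrt * A⁻¹ * hA.posSemidef.sqrt = 1 := by
  have hS := hA.isUnit_det_sqrt
  have hSS := hA.posSemidef.sqrt_mul_sqrt
  generalize hA.posSemidef.sqrt = S at hS hSS ⊢
  subst hSS
  rw [mul_inv_rev, mul_assoc, mul_assoc, nonsing_inv_mul _ hS, mul_one, mul_nonsing_inv _ hS]

theorem PosDef.inv_sqrt_mul_mul_inv_sqrt (hA : A.PosDef) :
    (hA.posSemidef.sqrt)⁻¹ * A * (hA.posSemidef.sqrt)⁻¹ = 1 := by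
  have hS := hA.isUnit_det_sqrt
  have hSS := hA.posSemidef.sqrt_mul_sqrt
  generalize hA.posSemidef.sqrt = S at hS hSS ⊢
  subst hSS
  rw [mul_assoc, mul_assoc, mul_nonsing_inv _ hS, mul_one, nonsing_inv_mul _ hS]

end Matrix

theorem stmt9_general (d : ℕ) (M M' N : Matrix (Fin d) (Fin d) ℝ) (hM : M.PosDef) (ε : ℝ)
    (hε : ε ≤ 1/8)
    (h1 : (M' - (1 - ε) • M).PosSemidef) (h2 : ((1 + ε) • M - M').PosSemidef)
    (h3 : (M⁻¹ - (7/8 : ℝ) • N).PosSemidef) (h4 : ((8/7 : ℝ) • N - M⁻¹).PosSemidef) :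
    ∀ x : Fin d → ℝ,
      Real.sqrt (∑ i,
          (((hM.posSemidef.sqrt * (1 - N * M') * (hM.posSemidef.sqrt)⁻¹) *ᵥ x) i) ^ 2) ≤
        (2/5) * Real.sqrt (∑ i, (x i) ^ 2) := by
  set S := hM.posSemidef.sqrt
  have hS : S.IsHermitian := hM.posSemidef.isHermitian_sqrt
  have hN₁ : (8/7 : ℝ)⁻¹ • M⁻¹ ≤ N := (inv_smul_le_iff_of_pos (by norm_num)).mpr (le_iff.mpr h4)
  have hN₂ : N ≤ (7/8 : ℝ)⁻¹ • M⁻¹ := (le_inv_smul_iff_of_pos (by norm_num)).mpr (le_iff.mpr h3)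
  have hP := hS.isSelfAdjoint.conjugate_mem_Icc_algebraMap hM.sqrt_mul_inv_mul_sqrt hN₁ hN₂
  have hQ := hS.inv.isSelfAdjoint.conjugate_mem_Icc_algebraMap hM.inv_sqrt_mul_mul_inv_sqrt
    (le_iff.mpr h1) (le_iff.mpr h2)
  have hP₁ : ‖1 - S * N * S‖ ≤ 1/7 := by
    simpa using norm_algebraMap_sub_le_of_mem_Icc (c := 1) (by norm_num) hP (by norm_num)
      (by norm_num)
  have hP₀ : ‖S * N * S‖ ≤ 8/7 := by
    simpa using norm_algebraMap_sub_le_of_mem_Icc (c := 0) (by norm_num) hP (by norm_num)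
      (by norm_num)
  have hQ₁ : ‖1 - S⁻¹ * M' * S⁻¹‖ ≤ 1/8 := by
    simpa using norm_algebraMap_sub_le_of_mem_Icc (c := 1) (by norm_num) hQ (by linarith)
      (by linarith)
  have hconj : S * (1 - N * M') * S⁻¹ = 1 - (S * N * S) * (S⁻¹ * M' * S⁻¹) := by
    have hS₀ : IsUnit S.det := hM.isUnit_det_sqrt
    simp only [mul_sub, sub_mul, mul_one, mul_nonsing_inv _ hS₀, mul_assoc,
      mul_nonsing_inv_cancel_left _ _ hS₀]
  refine sqrt_sum_sq_mulVec_le_of_l2_opNorm_le ?_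
  calc ‖S * (1 - N * M') * S⁻¹‖ ≤ ‖1 - S * N * S‖ + ‖S * N * S‖ * ‖1 - S⁻¹ * M' * S⁻¹‖ :=
        hconj ▸ norm_one_sub_mul_le _ _
    _ ≤ 1/7 + 8/7 * (1/8) := by gcongr
    _ ≤ 2/5 := by norm_num

/-- Contraction bound of the preconditioned Richardson iteration:
`‖M^{1/2}(I − NM')M^{-1/2}‖₂ ≤ 2/5`, stated via the ℓ₂ operator bound on all vectors. -/
theorem stmt9 (d : ℕ) (M M' N : Matrix (Fin d) (Fin d) ℝ) (hM : M.PosDef) (ε : ℝ)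
    (hε0 : 0 ≤ ε) (hε : ε ≤ 1/8)
    (h1 : (M' - (1 - ε) • M).PosSemidef) (h2 : ((1 + ε) • M - M').PosSemidef)
    (h3 : (M⁻¹ - (7/8 : ℝ) • N).PosSemidef) (h4 : ((8/7 : ℝ) • N - M⁻¹).PosSemidef) :
    ∀ x : Fin d → ℝ,
      Real.sqrt (∑ i,
          (((hM.posSemidef.sqrt * (1 - N * M') * (hM.posSemidef.sqrt)⁻¹) *ᵥ x) i) ^ 2) ≤
        (2/5) * Real.sqrt (∑ i, (x i) ^ 2) :=
  stmt9_general d M M' N hM ε hε h1 h2 h3 h4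
end

section
/- Let P ∈ ℝ^{n×n} be an orthogonal projection matrix with σ = diag(P), Σ = diag(σ), Λ = Σ − P∘P, and let τ ∈ ℝ^n_{>0} with τ_i ≥ σ_i for all i, T = diag(τ). Then for all y ∈ ℝ^n and β ∈ [0, 1/2]: ‖(T^{-1}Λ − βI)y‖_∞ ≤ (1−β)‖y‖_∞ + min{‖y‖_∞, ‖y‖_τ} and ‖T^{1/2}(T^{-1}Λ − βI)T^{-1/2}‖₂ ≤ 1 − β, where ‖y‖_τ² = Σ_i τ_i y_i². -/
/-!
For an orthogonal projection `P` one has `σ_i = ∑_j P_ij²`, so `Λ = Σ − P∘P` is the Laplacian of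
the graph with edge weights `P_ij²`, whence `0 ⪯ Λ`; and `Λ ⪯ Σ ⪯ T` because `P∘P ⪰ 0` by the Schur
product theorem. Hence `A = T^{-1/2} Λ T^{-1/2}` satisfies `0 ⪯ A ⪯ I`, so `A² ⪯ A` and
`(1 − β)² − (A − β)² = (1 − 2β)(I − A) + (A − A²) ⪰ 0` for `β ≤ 1/2`: this is the spectral bound.
For the sup-norm bound, `|σ_i/τ_i − β| ≤ 1 − β` takes care of the diagonal part, while the row
sum `∑_j P_ij² y_j` is at most `σ_i ‖y‖_∞` and, by weighted Cauchy–Schwarz and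
`P_ij² ≤ σ_i σ_j`, at most `σ_i ‖y‖_τ`.
-/

open Matrix

namespace Matrix

open scoped MatrixOrder

variable {ι : Type*} [Fintype ι] {P : Matrix ι ι ℝ}

theorem _root_.IsStarProjection.apply_symm (hP : IsStarProjection P) (i j : ι) : P j i = P i j :=
  (isHermitian_iff_isSymm.mp hP.isSelfAdjoint).apply i j

theorem _root_.IsStarProjection.apply_eq_sum_mul (hP : IsStarProjection P) (i j : ι) :
    P i j = ∑ k, P i k * P j k := by
  conv_lhs => rw [← hP.isIdempotentElem.eq, mul_apply]
  simp only [hP.apply_symm _ j]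

theorem _root_.IsStarProjection.diag_eq_sum_sq (hP : IsStarProjection P) (i : ι) :
    P i i = ∑ j, P i j ^ 2 := by
  simp only [hP.apply_eq_sum_mul i i, sq]

theorem _root_.IsStarProjection.sq_apply_le_diag_mul_diag (hP : IsStarProjection P) (i j : ι) :
    P i j ^ 2 ≤ P i i * P j j := by
  rw [hP.apply_eq_sum_mul i j, hP.diag_eq_sum_sq i, hP.diag_eq_sum_sq j]
  exact Finset.sum_mul_sq_le_sq_mul_sq _ _ _

theorem _root_.IsStarProjection.diag_nonneg (hP : IsStarProjection P) (i : ι) : 0 ≤ P i i :=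
  hP.diag_eq_sum_sq i ▸ Finset.sum_nonneg fun _ _ => sq_nonneg _

theorem _root_.IsStarProjection.abs_sum_sq_mul_le_mul_norm (hP : IsStarProjection P) (i : ι)
    (y : ι → ℝ) : |∑ j, P i j ^ 2 * y j| ≤ P i i * ‖y‖ := by
  calc |∑ j, P i j ^ 2 * y j| ≤ ∑ j, P i j ^ 2 * ‖y‖ := by
        refine (Finset.abs_sum_le_sum_abs _ _).trans (Finset.sum_le_sum fun j _ => ?_)
        rw [abs_mul, abs_sq]
        exact mul_le_mul_of_nonneg_left (norm_le_pi_norm y j) (sq_nonneg _)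
    _ = P i i * ‖y‖ := by rw [← Finset.sum_mul, hP.diag_eq_sum_sq]

theorem _root_.IsStarProjection.abs_sum_sq_mul_le_mul_sqrt (hP : IsStarProjection P)
    {τ : ι → ℝ} (hτ : ∀ i, P i i ≤ τ i) (i : ι) (y : ι → ℝ) :
    |∑ j, P i j ^ 2 * y j| ≤ P i i * √(∑ j, τ j * y j ^ 2) := by
  have hweighted : ∑ j, P i j ^ 2 * y j ^ 2 ≤ P i i * ∑ j, τ j * y j ^ 2 := by
    rw [Finset.mul_sum]
    refine Finset.sum_le_sum fun j _ => ?_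
    calc P i j ^ 2 * y j ^ 2 ≤ P i i * P j j * y j ^ 2 :=
          mul_le_mul_of_nonneg_right (hP.sq_apply_le_diag_mul_diag i j) (sq_nonneg _)
      _ ≤ P i i * τ j * y j ^ 2 := by
          gcongr
          · exact hP.diag_nonneg i
          · exact hτ j
      _ = P i i * (τ j * y j ^ 2) := mul_assoc _ _ _
  have hcs : (∑ j, P i j ^ 2 * y j) ^ 2 ≤ (∑ j, P i j ^ 2) * ∑ j, P i j ^ 2 * y j ^ 2 :=
    Finset.sum_sq_le_sum_mul_sum_of_sq_le_mul _ (fun _ _ => sq_nonneg _)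
      (fun _ _ => mul_nonneg (sq_nonneg _) (sq_nonneg _)) fun _ _ => le_of_eq (by ring)
  rw [← hP.diag_eq_sum_sq] at hcs
  calc |∑ j, P i j ^ 2 * y j| = √((∑ j, P i j ^ 2 * y j) ^ 2) := (Real.sqrt_sq_eq_abs _).symm
    _ ≤ √(P i i ^ 2 * ∑ j, τ j * y j ^ 2) := by
        refine Real.sqrt_le_sqrt (hcs.trans ?_)
        rw [sq, mul_assoc]
        exact mul_le_mul_of_nonneg_left hweighted (hP.diag_nonneg i)
    _ = P i i * √(∑ j, τ j * y j ^ 2) := by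
        rw [Real.sqrt_mul (sq_nonneg _), Real.sqrt_sq (hP.diag_nonneg i)]

variable [DecidableEq ι]

theorem posSemidef_diagonal_sum_sub {W : Matrix ι ι ℝ} (hW : W.IsSymm)
    (hW0 : ∀ i j, 0 ≤ W i j) :
    (diagonal (fun i => ∑ j, W i j) - W).PosSemidef := by
  refine .of_dotProduct_mulVec_nonneg ?_ fun z => ?_
  · exact (isHermitian_diagonal _).sub (isHermitian_iff_isSymm.mpr hW)
  have hquad : z ⬝ᵥ ((diagonal (fun i => ∑ j, W i j) - W) *ᵥ z) =
      ∑ i, ∑ j, W i j * z i ^ 2 - ∑ i, ∑ j, W i j * (z i * z j) := by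
    rw [sub_mulVec, dotProduct_sub]
    congr 1
    · simp only [dotProduct, mulVec_diagonal, Finset.mul_sum, Finset.sum_mul]
      exact Finset.sum_congr rfl fun i _ => Finset.sum_congr rfl fun j _ => by ring
    · simp only [dotProduct, mulVec, Finset.mul_sum]
      exact Finset.sum_congr rfl fun i _ => Finset.sum_congr rfl fun j _ => by ring
  have hsymm : ∑ i, ∑ j, W i j * z j ^ 2 = ∑ i, ∑ j, W i j * z i ^ 2 := by
    rw [Finset.sum_comm]
    simp only [hW.apply]
  have hlap : 2 * (z ⬝ᵥ ((diagonal (fun i => ∑ j, W i j) - W) *ᵥ z)) =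
      ∑ i, ∑ j, W i j * (z i - z j) ^ 2 := by
    have hexp : ∀ i j, W i j * (z i - z j) ^ 2 =
        W i j * z i ^ 2 + W i j * z j ^ 2 - 2 * (W i j * (z i * z j)) := fun i j => by ring
    simp only [hexp, Finset.sum_add_distrib, Finset.sum_sub_distrib, ← Finset.mul_sum, hsymm,
      hquad]
    ring
  have hnonneg : 0 ≤ ∑ i, ∑ j, W i j * (z i - z j) ^ 2 :=
    Finset.sum_nonneg fun i _ => Finset.sum_nonneg fun j _ => mul_nonneg (hW0 i j) (sq_nonneg _)
  simp only [star_trivial]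
  linarith

theorem mul_self_le_self_of_nonneg_of_le_one {𝕜 : Type*} [RCLike 𝕜] {A : Matrix ι ι 𝕜}
    (h0 : 0 ≤ A) (h1 : A ≤ 1) : A * A ≤ A := by
  set S := CFC.sqrt A
  have hSS : S * S = A := CFC.sqrt_mul_sqrt_self A h0
  have hS : IsSelfAdjoint S := (CFC.sqrt_nonneg A).isSelfAdjoint
  calc A * A = S * A * S := by rw [← hSS]; noncomm_ring
    _ ≤ S * 1 * S := hS.conjugate_le_conjugate h1
    _ = A := by rw [mul_one, hSS]

theorem sub_smul_one_mul_self_le {A : Matrix ι ι ℝ} (h0 : 0 ≤ A) (h1 : A ≤ 1) {β : ℝ}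
    (hβ : β ≤ 1 / 2) : (A - β • 1) * (A - β • 1) ≤ (1 - β) ^ 2 • 1 := by
  have hsplit : (1 - β) ^ 2 • 1 - (A - β • 1) * (A - β • 1) =
      (1 - 2 * β) • (1 - A) + (A - A * A) := by
    simp only [sub_mul, mul_sub, smul_mul_assoc, mul_smul_comm, one_mul, mul_one]
    module
  rw [← sub_nonneg, hsplit]
  exact add_nonneg (smul_nonneg (by linarith) (sub_nonneg.mpr h1))
    (sub_nonneg.mpr (mul_self_le_self_of_nonneg_of_le_one h0 h1))

theorem sqrt_sum_sq_mulVec_le {B : Matrix ι ι ℝ} {c : ℝ} (hc : 0 ≤ c) (hB : Bᵀ * B ≤ c ^ 2 • 1)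
    (y : ι → ℝ) : √(∑ i, (B *ᵥ y) i ^ 2) ≤ c * √(∑ i, y i ^ 2) := by
  have hform := (le_iff.mp hB).dotProduct_mulVec_nonneg y
  simp only [star_trivial, sub_mulVec, dotProduct_sub, smul_mulVec, one_mulVec, dotProduct_smul,
    ← mulVec_mulVec, dotProduct_mulVec y Bᵀ, vecMul_transpose, smul_eq_mul, sub_nonneg] at hform
  rw [← Real.sqrt_sq hc, ← Real.sqrt_mul (sq_nonneg c)]
  refine Real.sqrt_le_sqrt ?_
  simpa only [dotProduct, sq] using hform

/-- The matrix `Λ = Σ − P∘P`, with `Σ = diag(P₁₁, …, Pₙₙ)` the leverage scores of `P`. -/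
def leverageLaplacian (P : Matrix ι ι ℝ) : Matrix ι ι ℝ :=
  diagonal (fun i => P i i) - of fun i j => P i j ^ 2

theorem _root_.IsStarProjection.leverageLaplacian_nonneg (hP : IsStarProjection P) :
    0 ≤ leverageLaplacian P := by
  rw [nonneg_iff_posSemidef, leverageLaplacian]
  simp only [hP.diag_eq_sum_sq]
  simpa only [of_apply] using posSemidef_diagonal_sum_sub (W := of fun i j => P i j ^ 2)
    (IsSymm.ext fun i j => by simp [hP.apply_symm]) fun _ _ => sq_nonneg _

theorem _root_.IsStarProjection.leverageLaplacian_le_diagonal (hP : IsStarProjection P)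
    {τ : ι → ℝ} (hτ : ∀ i, P i i ≤ τ i) : leverageLaplacian P ≤ diagonal τ := by
  have hschur : (of fun i j => P i j ^ 2).PosSemidef := by
    have hsq : (of fun i j => P i j ^ 2) = P ⊙ P := by
      ext i j
      simp [sq]
    rw [hsq]
    exact hP.nonneg.posSemidef.hadamard hP.nonneg.posSemidef
  have hdiag : (diagonal fun i => τ i - P i i).PosSemidef :=
    posSemidef_diagonal_iff.mpr fun i => sub_nonneg.mpr (hτ i)
  rw [le_iff, leverageLaplacian, sub_sub_eq_add_sub, add_sub_right_comm, diagonal_sub]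
  exact hdiag.add hschur

theorem diagonal_inv_mul_leverageLaplacian_sub_mulVec_apply (τ : ι → ℝ) (β : ℝ) (y : ι → ℝ)
    (i : ι) : ((diagonal (fun i => (τ i)⁻¹) * leverageLaplacian P - β • 1) *ᵥ y) i =
      ((τ i)⁻¹ * P i i - β) * y i - (τ i)⁻¹ * ∑ j, P i j ^ 2 * y j := by
  rw [sub_mulVec, smul_mulVec, one_mulVec, ← mulVec_mulVec, leverageLaplacian, sub_mulVec]
  simp only [Pi.sub_apply, Pi.smul_apply, smul_eq_mul, mulVec_diagonal]
  simp only [mulVec, dotProduct, of_apply]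
  ring

theorem _root_.IsStarProjection.norm_diagonal_inv_mul_leverageLaplacian_sub_mulVec_le
    (hP : IsStarProjection P) {τ : ι → ℝ} (hτpos : ∀ i, 0 < τ i) (hτ : ∀ i, P i i ≤ τ i)
    {β : ℝ} (hβ : β ≤ 1 / 2) (y : ι → ℝ) :
    ‖(diagonal (fun i => (τ i)⁻¹) * leverageLaplacian P - β • 1) *ᵥ y‖ ≤
      (1 - β) * ‖y‖ + min ‖y‖ √(∑ i, τ i * y i ^ 2) := by
  have hβ1 : 0 ≤ 1 - β := by linarith
  refine (pi_norm_le_iff_of_nonneg (by positivity)).mpr fun i => ?_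
  have hratio : |(τ i)⁻¹ * P i i - β| ≤ 1 - β := by
    have h0 : 0 ≤ (τ i)⁻¹ * P i i := mul_nonneg (inv_nonneg.mpr (hτpos i).le) (hP.diag_nonneg i)
    have h1 : (τ i)⁻¹ * P i i ≤ 1 := by
      rw [inv_mul_le_iff₀ (hτpos i), mul_one]
      exact hτ i
    exact abs_le.mpr ⟨by linarith, by linarith⟩
  have hrow : (τ i)⁻¹ * |∑ j, P i j ^ 2 * y j| ≤ min ‖y‖ √(∑ i, τ i * y i ^ 2) := by
    rw [inv_mul_le_iff₀ (hτpos i), mul_min_of_nonneg _ _ (hτpos i).le]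
    exact le_min
      ((hP.abs_sum_sq_mul_le_mul_norm i y).trans (by gcongr; exact hτ i))
      ((hP.abs_sum_sq_mul_le_mul_sqrt hτ i y).trans (by gcongr; exact hτ i))
  rw [Real.norm_eq_abs, diagonal_inv_mul_leverageLaplacian_sub_mulVec_apply]
  calc _ ≤ |(τ i)⁻¹ * P i i - β| * |y i| + (τ i)⁻¹ * |∑ j, P i j ^ 2 * y j| := by
        refine (abs_sub _ _).trans_eq ?_
        rw [abs_mul, abs_mul, abs_of_pos (inv_pos.mpr (hτpos i))]
    _ ≤ (1 - β) * ‖y‖ + min ‖y‖ √(∑ i, τ i * y i ^ 2) := by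
        gcongr
        exact (Real.norm_eq_abs _).symm.trans_le (norm_le_pi_norm y i)

theorem _root_.IsStarProjection.sqrt_sum_sq_conj_mulVec_le
    (hP : IsStarProjection P) {τ : ι → ℝ} (hτpos : ∀ i, 0 < τ i) (hτ : ∀ i, P i i ≤ τ i)
    {β : ℝ} (hβ : β ≤ 1 / 2) (y : ι → ℝ) :
    √(∑ i, ((diagonal (fun i => √(τ i)) * (diagonal (fun i => (τ i)⁻¹) * leverageLaplacian P -
        β • 1) * diagonal (fun i => (√(τ i))⁻¹)) *ᵥ y) i ^ 2) ≤ (1 - β) * √(∑ i, y i ^ 2) := by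
  set D : Matrix ι ι ℝ := diagonal fun i => (√(τ i))⁻¹
  have hsqrt : ∀ i, √(τ i) ≠ 0 := fun i => Real.sqrt_ne_zero'.mpr (hτpos i)
  have hD : IsSelfAdjoint D := isHermitian_diagonal _
  have hconj : diagonal (fun i => √(τ i)) * (diagonal (fun i => (τ i)⁻¹) * leverageLaplacian P -
      β • 1) * D = D * leverageLaplacian P * D - β • 1 := by
    have hleft : diagonal (fun i => √(τ i)) * diagonal (fun i => (τ i)⁻¹) = D := by
      rw [diagonal_mul_diagonal]
      simp only [← div_eq_mul_inv, Real.sqrt_div_self', one_div, D]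
    have hright : diagonal (fun i => √(τ i)) * D = 1 := by
      rw [diagonal_mul_diagonal, ← diagonal_one]
      simp only [mul_inv_cancel₀ (hsqrt _)]
    rw [mul_sub, sub_mul, ← mul_assoc, hleft, mul_smul_comm, smul_mul_assoc, mul_one, hright]
  have h0 : 0 ≤ D * leverageLaplacian P * D := hD.conjugate_nonneg hP.leverageLaplacian_nonneg
  have h1 : D * leverageLaplacian P * D ≤ 1 := calc
    _ ≤ D * diagonal τ * D := hD.conjugate_le_conjugate (hP.leverageLaplacian_le_diagonal hτ)
    _ = 1 := by
      rw [diagonal_mul_diagonal, diagonal_mul_diagonal, ← diagonal_one]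
      congr 1
      funext i
      rw [mul_right_comm, ← sq, inv_pow, Real.sq_sqrt (hτpos i).le, inv_mul_cancel₀ (hτpos i).ne']
  have hsymm : (D * leverageLaplacian P * D - β • 1)ᵀ = D * leverageLaplacian P * D - β • 1 := by
    rw [transpose_sub, transpose_smul, transpose_one,
      ← conjTranspose_eq_transpose_of_trivial, h0.posSemidef.isHermitian.eq]
  rw [hconj]
  refine sqrt_sum_sq_mulVec_le (by linarith) ?_ y
  rw [hsymm]
  exact sub_smul_one_mul_self_le h0 h1 hβ

end Matrix

theorem stmt10_general (n : ℕ) (P : Matrix (Fin n) (Fin n) ℝ) (hsym : P.IsSymm) (hproj : P * P = P)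
    (τ : Fin n → ℝ) (hτpos : ∀ i, 0 < τ i) (hτ : ∀ i, P i i ≤ τ i)
    (β : ℝ) (hβ : β ≤ 1/2) :
    (∀ y : Fin n → ℝ,
      ‖(Matrix.diagonal (fun i => (τ i)⁻¹) *
          (Matrix.diagonal (fun i => P i i) - Matrix.of fun i j => (P i j) ^ 2) -
          β • (1 : Matrix (Fin n) (Fin n) ℝ)) *ᵥ y‖ ≤
        (1 - β) * ‖y‖ + min ‖y‖ (Real.sqrt (∑ i, τ i * y i ^ 2))) ∧
    (∀ y : Fin n → ℝ,
      Real.sqrt (∑ i,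
          (((Matrix.diagonal (fun i => Real.sqrt (τ i)) *
              (Matrix.diagonal (fun i => (τ i)⁻¹) *
                (Matrix.diagonal (fun i => P i i) - Matrix.of fun i j => (P i j) ^ 2) -
                β • (1 : Matrix (Fin n) (Fin n) ℝ)) *
              Matrix.diagonal (fun i => (Real.sqrt (τ i))⁻¹)) *ᵥ y) i) ^ 2) ≤
        (1 - β) * Real.sqrt (∑ i, y i ^ 2)) := by
  have hP : IsStarProjection P := ⟨hproj, isHermitian_iff_isSymm.mpr hsym⟩
  exact ⟨hP.norm_diagonal_inv_mul_leverageLaplacian_sub_mulVec_le hτpos hτ hβ,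
    hP.sqrt_sum_sq_conj_mulVec_le hτpos hτ hβ⟩

/-- Bounds on `T⁻¹Λ − βI` for `Λ = Σ − P∘P`, in the sup norm and in the `τ`-conjugated
spectral norm (stated as an ℓ₂ operator bound). -/
theorem stmt10 (n : ℕ) (P : Matrix (Fin n) (Fin n) ℝ) (hsym : P.IsSymm) (hproj : P * P = P)
    (τ : Fin n → ℝ) (hτpos : ∀ i, 0 < τ i) (hτ : ∀ i, P i i ≤ τ i)
    (β : ℝ) (hβ0 : 0 ≤ β) (hβ : β ≤ 1/2) :
    (∀ y : Fin n → ℝ,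
      ‖(Matrix.diagonal (fun i => (τ i)⁻¹) *
          (Matrix.diagonal (fun i => P i i) - Matrix.of fun i j => (P i j) ^ 2) -
          β • (1 : Matrix (Fin n) (Fin n) ℝ)) *ᵥ y‖ ≤
        (1 - β) * ‖y‖ + min ‖y‖ (Real.sqrt (∑ i, τ i * y i ^ 2))) ∧
    (∀ y : Fin n → ℝ,
      Real.sqrt (∑ i,
          (((Matrix.diagonal (fun i => Real.sqrt (τ i)) *
              (Matrix.diagonal (fun i => (τ i)⁻¹) *
                (Matrix.diagonal (fun i => P i i) - Matrix.of fun i j => (P i j) ^ 2) -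
                β • (1 : Matrix (Fin n) (Fin n) ℝ)) *
              Matrix.diagonal (fun i => (Real.sqrt (τ i))⁻¹)) *ᵥ y) i) ^ 2) ≤
        (1 - β) * Real.sqrt (∑ i, y i ^ 2)) :=
  stmt10_general n P hsym hproj τ hτpos hτ β hβ
end

section
/- Let Q ∈ ℝ^{n×n} be a symmetric PSD matrix with Q ⪯ e^{ε}Π for an orthogonal projection Π and ε ≤ 1/80. Let w̄ ∈ ℝ^n_{>0} with W̄ = diag(w̄), and suppose w̄ ≈_{3ε} μ·τ coordinatewise for some μ > 0 and τ ∈ ℝ^n_{>0} with diag(Π)_i ≤ 2τ_i for all i. Then for all h ∈ ℝ^n: ‖W̄^{-1/2} Q W̄^{1/2} h‖_τ ≤ e^{4ε}‖h‖_τ and ‖W̄^{-1/2} Q W̄^{1/2} h‖_∞ ≤ 2‖h‖_τ. -/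
/-!
Put `g = W̄^{1/2} h`, so that `(W̄^{-1/2} Q W̄^{1/2} h)_i = (Q g)_i / √w̄_i`. Since
`1 - Π = (1 - Π)ᵀ(1 - Π)` is PSD, `0 ⪯ Q ⪯ e^ε Π ⪯ e^ε I`, and Cauchy–Schwarz for the
semi-inner product of `Q` gives `‖Q g‖ ≤ e^ε ‖g‖` and `(Q g)_i² ≤ Q_ii · gᵀQg ≤ 2 e^ε τ_i · e^ε ‖g‖²`.
The weights satisfy `τ_i / w̄_i ≤ e^{3ε} / μ` and `‖g‖² ≤ e^{3ε} μ ‖h‖_τ²`, so the squared `τ`-norm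
grows by at most `e^{8ε}` and every squared coordinate is at most `2 e^{8ε} ‖h‖_τ² ≤ 4 ‖h‖_τ²`.
-/

open Matrix Finset
open scoped MatrixOrder

lemma Real.sqrt_le_mul_sqrt_of_le_sq_mul {x k S : ℝ} (hk : 0 ≤ k) (h : x ≤ k ^ 2 * S) :
    √x ≤ k * √S :=
  (Real.sqrt_le_sqrt h).trans_eq (by rw [Real.sqrt_mul (sq_nonneg k), Real.sqrt_sq hk])

lemma Real.abs_le_mul_sqrt_of_sq_le_sq_mul {y k S : ℝ} (hk : 0 ≤ k) (h : y ^ 2 ≤ k ^ 2 * S) :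
    |y| ≤ k * √S :=
  Real.sqrt_sq_eq_abs y ▸ Real.sqrt_le_mul_sqrt_of_le_sq_mul hk h

namespace Matrix

variable {ι : Type*}

lemma PosSemidef.apply_le_of_sub {A Q : Matrix ι ι ℝ} (h : (A - Q).PosSemidef) (i : ι) :
    Q i i ≤ A i i :=
  sub_nonneg.1 h.diag_nonneg

variable [Fintype ι]

lemma dotProduct_sq_le_dotProduct_self_mul (u v : ι → ℝ) :
    (u ⬝ᵥ v) ^ 2 ≤ (u ⬝ᵥ u) * (v ⬝ᵥ v) := by
  simpa only [dotProduct, ← sq] using sum_mul_sq_le_sq_mul_sq univ u v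

namespace PosSemidef

variable {Q : Matrix ι ι ℝ}

lemma dotProduct_mulVec_sq_le (hQ : Q.PosSemidef) (x y : ι → ℝ) :
    (y ⬝ᵥ (Q *ᵥ x)) ^ 2 ≤ (y ⬝ᵥ (Q *ᵥ y)) * (x ⬝ᵥ (Q *ᵥ x)) := by
  classical
  obtain ⟨R, hRT, rfl⟩ : ∃ R : Matrix ι ι ℝ, Rᵀ = R ∧ Q = R * R :=
    ⟨CFC.sqrt Q, (CFC.sqrt_nonneg Q).posSemidef.isHermitian,
      (CFC.sqrt_mul_sqrt_self Q hQ.nonneg).symm⟩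
  have hR : ∀ u v, u ⬝ᵥ ((R * R) *ᵥ v) = (R *ᵥ u) ⬝ᵥ (R *ᵥ v) := fun u v => by
    rw [← mulVec_mulVec, dotProduct_mulVec, ← mulVec_transpose, hRT]
  simpa only [hR] using dotProduct_sq_le_dotProduct_self_mul (R *ᵥ y) (R *ᵥ x)

lemma mulVec_apply_sq_le [DecidableEq ι] (hQ : Q.PosSemidef) (x : ι → ℝ) (i : ι) :
    (Q *ᵥ x) i ^ 2 ≤ Q i i * (x ⬝ᵥ (Q *ᵥ x)) := by
  simpa [mulVec_single_one] using hQ.dotProduct_mulVec_sq_le x (Pi.single i 1)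

lemma dotProduct_mulVec_le_of_smul_one_sub [DecidableEq ι] {c : ℝ}
    (hQc : (c • 1 - Q).PosSemidef) (x : ι → ℝ) : x ⬝ᵥ (Q *ᵥ x) ≤ c * (x ⬝ᵥ x) := by
  simpa only [sub_mulVec, smul_mulVec, one_mulVec, dotProduct_sub, dotProduct_smul, star_trivial,
    smul_eq_mul, sub_nonneg] using hQc.dotProduct_mulVec_nonneg x

/-- `0 ≤ Q ≤ c` gives `‖Q x‖ ≤ c ‖x‖`: Cauchy–Schwarz with `y = Q x` bounds `‖Q x‖⁴` by
`(Q x)ᵀ Q (Q x) · xᵀ Q x ≤ c ‖Q x‖² · c ‖x‖²`. -/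
lemma mulVec_dotProduct_self_le [DecidableEq ι] {c : ℝ} (hQ : Q.PosSemidef) (hc : 0 ≤ c)
    (hQc : (c • 1 - Q).PosSemidef) (x : ι → ℝ) :
    (Q *ᵥ x) ⬝ᵥ (Q *ᵥ x) ≤ c ^ 2 * (x ⬝ᵥ x) := by
  set q := (Q *ᵥ x) ⬝ᵥ (Q *ᵥ x)
  have hcs : q ^ 2 ≤ ((Q *ᵥ x) ⬝ᵥ (Q *ᵥ (Q *ᵥ x))) * (x ⬝ᵥ (Q *ᵥ x)) :=
    hQ.dotProduct_mulVec_sq_le x (Q *ᵥ x)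
  have h₁ := dotProduct_mulVec_le_of_smul_one_sub hQc (Q *ᵥ x)
  have h₂ := dotProduct_mulVec_le_of_smul_one_sub hQc x
  have hq : 0 ≤ q := dotProduct_self_star_nonneg _
  have hxQx : 0 ≤ x ⬝ᵥ (Q *ᵥ x) := hQ.dotProduct_mulVec_nonneg x
  have key : q * q ≤ q * (c ^ 2 * (x ⬝ᵥ x)) := calc
    q * q = q ^ 2 := (sq q).symm
    _ ≤ (c * q) * (c * (x ⬝ᵥ x)) := hcs.trans (mul_le_mul h₁ h₂ hxQx (mul_nonneg hc hq))
    _ = q * (c ^ 2 * (x ⬝ᵥ x)) := by ring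
  rcases hq.eq_or_lt with hq0 | hq0
  · rw [← hq0]; exact mul_nonneg (sq_nonneg c) (dotProduct_self_star_nonneg x)
  · exact le_of_mul_le_mul_left key hq0

end PosSemidef

lemma posSemidef_one_sub_of_isSymm_of_mul_self [DecidableEq ι] {P : Matrix ι ι ℝ}
    (hP : P.IsSymm) (hPP : P * P = P) : (1 - P).PosSemidef := by
  have h : 1 - P = (1 - P)ᴴ * (1 - P) := by
    rw [conjTranspose_eq_transpose_of_trivial, transpose_sub, transpose_one, hP.eq, sub_mul,
      mul_sub, mul_sub, hPP]
    simp
  rw [h]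
  exact posSemidef_conjTranspose_mul_self _

lemma PosSemidef.smul_one_sub_of_smul_sub [DecidableEq ι] {P Q : Matrix ι ι ℝ} {c : ℝ}
    (hc : 0 ≤ c) (hP : P.IsSymm) (hPP : P * P = P) (hQP : (c • P - Q).PosSemidef) :
    (c • 1 - Q).PosSemidef := by
  convert hQP.add ((posSemidef_one_sub_of_isSymm_of_mul_self hP hPP).smul hc) using 1
  rw [smul_sub]; abel

lemma diagonal_inv_mul_mul_diagonal_mulVec_apply [DecidableEq ι] (d : ι → ℝ)
    (Q : Matrix ι ι ℝ) (h : ι → ℝ) (i : ι) :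
    ((diagonal (fun j => (d j)⁻¹) * Q * diagonal d) *ᵥ h) i =
      (d i)⁻¹ * (Q *ᵥ fun j => d j * h j) i := by
  rw [← mulVec_mulVec, ← mulVec_mulVec, mulVec_diagonal]
  congr 2
  ext j
  exact mulVec_diagonal d h j

section Weighted

variable {Q : Matrix ι ι ℝ} {w τ : ι → ℝ} {μ a c : ℝ}

lemma sqrt_mul_dotProduct_self_le (hw : ∀ i, 0 ≤ w i) (hwτ : ∀ i, w i ≤ a * (μ * τ i))
    (h : ι → ℝ) :
    (fun j => √(w j) * h j) ⬝ᵥ (fun j => √(w j) * h j) ≤ a * μ * ∑ i, τ i * h i ^ 2 := by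
  rw [mul_sum]
  refine sum_le_sum fun i _ => ?_
  calc √(w i) * h i * (√(w i) * h i) = w i * h i ^ 2 := by
        rw [mul_mul_mul_comm, Real.mul_self_sqrt (hw i), sq]
    _ ≤ a * (μ * τ i) * h i ^ 2 := mul_le_mul_of_nonneg_right (hwτ i) (sq_nonneg _)
    _ = a * μ * (τ i * h i ^ 2) := by ring

lemma sum_mul_sq_inv_sqrt_mul_mulVec_le [DecidableEq ι] (hQ : Q.PosSemidef) (hc : 0 ≤ c)
    (hQc : (c • 1 - Q).PosSemidef) (hw : ∀ i, 0 < w i) (hμ : 0 < μ) (ha : 0 ≤ a)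
    (hτw : ∀ i, μ * τ i ≤ a * w i) (hwτ : ∀ i, w i ≤ a * (μ * τ i)) (h : ι → ℝ) :
    ∑ i, τ i * ((√(w i))⁻¹ * (Q *ᵥ fun j => √(w j) * h j) i) ^ 2 ≤
      (a * c) ^ 2 * ∑ i, τ i * h i ^ 2 := by
  set g : ι → ℝ := fun j => √(w j) * h j
  have hτw' : ∀ i, τ i / w i ≤ a / μ := fun i =>
    (div_le_div_iff₀ (hw i) hμ).2 (by linarith [hτw i])
  calc ∑ i, τ i * ((√(w i))⁻¹ * (Q *ᵥ g) i) ^ 2 = ∑ i, τ i / w i * (Q *ᵥ g) i ^ 2 := by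
        refine sum_congr rfl fun i _ => ?_
        rw [mul_pow, inv_pow, Real.sq_sqrt (hw i).le]
        ring
    _ ≤ ∑ i, a / μ * (Q *ᵥ g) i ^ 2 :=
        sum_le_sum fun i _ => mul_le_mul_of_nonneg_right (hτw' i) (sq_nonneg _)
    _ = a / μ * ((Q *ᵥ g) ⬝ᵥ (Q *ᵥ g)) := by simp only [← mul_sum, dotProduct, sq]
    _ ≤ a / μ * (c ^ 2 * (a * μ * ∑ i, τ i * h i ^ 2)) := by
        gcongr
        exact (hQ.mulVec_dotProduct_self_le hc hQc g).trans (by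
          gcongr; exact sqrt_mul_dotProduct_self_le (fun i => (hw i).le) hwτ h)
    _ = (a * c) ^ 2 * ∑ i, τ i * h i ^ 2 := by field_simp

lemma inv_sqrt_mul_mulVec_apply_sq_le [DecidableEq ι] (hQ : Q.PosSemidef) (hc : 0 ≤ c)
    (hQc : (c • 1 - Q).PosSemidef) (hw : ∀ i, 0 < w i) (hτ : ∀ i, 0 ≤ τ i) (ha : 0 ≤ a)
    (hτw : ∀ i, μ * τ i ≤ a * w i) (hwτ : ∀ i, w i ≤ a * (μ * τ i)) {b : ℝ} (hb : 0 ≤ b)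
    (hdiag : ∀ i, Q i i ≤ b * τ i) (h : ι → ℝ) (i : ι) :
    ((√(w i))⁻¹ * (Q *ᵥ fun j => √(w j) * h j) i) ^ 2 ≤ b * c * a ^ 2 * ∑ i, τ i * h i ^ 2 := by
  set g : ι → ℝ := fun j => √(w j) * h j
  set S := ∑ i, τ i * h i ^ 2
  have hS : 0 ≤ S := sum_nonneg fun i _ => mul_nonneg (hτ i) (sq_nonneg _)
  have hgQg : g ⬝ᵥ (Q *ᵥ g) ≤ c * (a * μ * S) :=
    (PosSemidef.dotProduct_mulVec_le_of_smul_one_sub hQc g).trans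
      (mul_le_mul_of_nonneg_left (sqrt_mul_dotProduct_self_le (fun i => (hw i).le) hwτ h) hc)
  calc ((√(w i))⁻¹ * (Q *ᵥ g) i) ^ 2 = (Q *ᵥ g) i ^ 2 / w i := by
        rw [mul_pow, inv_pow, Real.sq_sqrt (hw i).le, inv_mul_eq_div]
    _ ≤ Q i i * (g ⬝ᵥ (Q *ᵥ g)) / w i :=
        div_le_div_of_nonneg_right (hQ.mulVec_apply_sq_le g i) (hw i).le
    _ ≤ b * τ i * (c * (a * μ * S)) / w i := by
        have := mul_le_mul (hdiag i) hgQg (hQ.dotProduct_mulVec_nonneg g) (mul_nonneg hb (hτ i))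
        exact div_le_div_of_nonneg_right this (hw i).le
    _ = b * c * a * S * (μ * τ i / w i) := by ring
    _ ≤ b * c * a * S * a := by
        gcongr
        exact (div_le_iff₀ (hw i)).2 (hτw i)
    _ = b * c * a ^ 2 * S := by ring

end Weighted

end Matrix

theorem stmt11_general (n : ℕ) (Q Pmat : Matrix (Fin n) (Fin n) ℝ) (hQ : Q.PosSemidef)
    (hPsym : Pmat.IsSymm) (hPproj : Pmat * Pmat = Pmat)
    (ε : ℝ) (hε : ε ≤ 1/80)
    (hQP : (Real.exp ε • Pmat - Q).PosSemidef)
    (w : Fin n → ℝ) (hw : ∀ i, 0 < w i)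
    (μ : ℝ) (hμ : 0 < μ) (τ : Fin n → ℝ) (hτ : ∀ i, 0 < τ i)
    (hwτ : ∀ i, Real.exp (-(3 * ε)) * (μ * τ i) ≤ w i ∧ w i ≤ Real.exp (3 * ε) * (μ * τ i))
    (hPτ : ∀ i, Pmat i i ≤ 2 * τ i) :
    ∀ h : Fin n → ℝ,
      Real.sqrt (∑ i, τ i *
          (((Matrix.diagonal (fun i => (Real.sqrt (w i))⁻¹) * Q *
              Matrix.diagonal (fun i => Real.sqrt (w i))) *ᵥ h) i) ^ 2) ≤
        Real.exp (4 * ε) * Real.sqrt (∑ i, τ i * h i ^ 2) ∧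
      ‖(Matrix.diagonal (fun i => (Real.sqrt (w i))⁻¹) * Q *
          Matrix.diagonal (fun i => Real.sqrt (w i))) *ᵥ h‖ ≤
        2 * Real.sqrt (∑ i, τ i * h i ^ 2) := by
  intro h
  have hc := (Real.exp_pos ε).le
  have hQc := hQP.smul_one_sub_of_smul_sub hc hPsym hPproj
  have hτw : ∀ i, μ * τ i ≤ Real.exp (3 * ε) * w i := fun i => by
    rw [← inv_mul_le_iff₀ (Real.exp_pos _), ← Real.exp_neg]; exact (hwτ i).1
  have hdiag : ∀ i, Q i i ≤ 2 * Real.exp ε * τ i := fun i => by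
    have hQP_ii := PosSemidef.apply_le_of_sub hQP i
    rw [Matrix.smul_apply, smul_eq_mul] at hQP_ii
    linarith [mul_le_mul_of_nonneg_left (hPτ i) hc]
  have hac : Real.exp (3 * ε) * Real.exp ε = Real.exp (4 * ε) := by rw [← Real.exp_add]; ring_nf
  have h8 : Real.exp (4 * ε) ^ 2 ≤ 2 := by
    rw [← Real.exp_nat_mul, ← Real.exp_log two_pos, Real.exp_le_exp]
    norm_num
    linarith [Real.log_two_gt_d9]
  have hS : 0 ≤ ∑ i, τ i * h i ^ 2 := sum_nonneg fun i _ => mul_nonneg (hτ i).le (sq_nonneg _)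
  constructor
  · simp only [diagonal_inv_mul_mul_diagonal_mulVec_apply]
    refine Real.sqrt_le_mul_sqrt_of_le_sq_mul (Real.exp_pos _).le ?_
    rw [← hac]
    exact sum_mul_sq_inv_sqrt_mul_mulVec_le hQ hc hQc hw hμ (Real.exp_pos _).le hτw
      (fun i => (hwτ i).2) h
  · rw [pi_norm_le_iff_of_nonneg (by positivity)]
    intro i
    rw [Real.norm_eq_abs, diagonal_inv_mul_mul_diagonal_mulVec_apply]
    refine Real.abs_le_mul_sqrt_of_sq_le_sq_mul zero_le_two
      ((inv_sqrt_mul_mulVec_apply_sq_le hQ hc hQc hw (fun i => (hτ i).le) (Real.exp_pos _).le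
        hτw (fun i => (hwτ i).2) (by positivity) hdiag h i).trans ?_)
    refine mul_le_mul_of_nonneg_right ?_ hS
    linear_combination 2 * h8 + 2 * (Real.exp (3 * ε) * Real.exp ε + Real.exp (4 * ε)) * hac

/-- Bounds on `W̄^{-1/2} Q W̄^{1/2} h` in the `τ`-norm and the sup norm, for a PSD matrix `Q`
dominated by `e^ε` times an orthogonal projection. -/
theorem stmt11 (n : ℕ) (Q Pmat : Matrix (Fin n) (Fin n) ℝ) (hQ : Q.PosSemidef)
    (hPsym : Pmat.IsSymm) (hPproj : Pmat * Pmat = Pmat)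
    (ε : ℝ) (hε0 : 0 ≤ ε) (hε : ε ≤ 1/80)
    (hQP : (Real.exp ε • Pmat - Q).PosSemidef)
    (w : Fin n → ℝ) (hw : ∀ i, 0 < w i)
    (μ : ℝ) (hμ : 0 < μ) (τ : Fin n → ℝ) (hτ : ∀ i, 0 < τ i)
    (hwτ : ∀ i, Real.exp (-(3 * ε)) * (μ * τ i) ≤ w i ∧ w i ≤ Real.exp (3 * ε) * (μ * τ i))
    (hPτ : ∀ i, Pmat i i ≤ 2 * τ i) :
    ∀ h : Fin n → ℝ,
      Real.sqrt (∑ i, τ i *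
          (((Matrix.diagonal (fun i => (Real.sqrt (w i))⁻¹) * Q *
              Matrix.diagonal (fun i => Real.sqrt (w i))) *ᵥ h) i) ^ 2) ≤
        Real.exp (4 * ε) * Real.sqrt (∑ i, τ i * h i ^ 2) ∧
      ‖(Matrix.diagonal (fun i => (Real.sqrt (w i))⁻¹) * Q *
          Matrix.diagonal (fun i => Real.sqrt (w i))) *ᵥ h‖ ≤
        2 * Real.sqrt (∑ i, τ i * h i ^ 2) :=
  stmt11_general n Q Pmat hQ hPsym hPproj ε hε hQP w hw μ hμ τ hτ hwτ hPτ
end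

section
/- Let x̂, x, s ∈ ℝ^n_{>0}, A ∈ ℝ^{n×d} full column rank, X = diag(x), S = diag(s), Q = AᵀXS^{-1}A, and let H ∈ ℝ^{d×d} satisfy H ≈_{ε_H} Q for ε_H ∈ (0, 1/20]. Define x^new = x̂ + XS^{-1}AH^{-1}(b − Aᵀx̂). Then ‖Aᵀx^new − b‖²_{Q^{-1}} ≤ 5ε_H · ‖Aᵀx̂ − b‖²_{Q^{-1}}. -/
/-!
With `r = Aᵀx̂ - b` and `u = H⁻¹r`, the new residual is `r - Qu`, so its squared `Q⁻¹`-norm is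
`rᵀQ⁻¹r - 2 rᵀu + uᵀQu`. The bound `e^{-ε}Q ⪯ H` gives `uᵀQu ≤ e^ε uᵀHu = e^ε rᵀu`, and
`H ⪯ e^ε Q` gives `rᵀu = rᵀH⁻¹r ≥ e^{-ε} rᵀQ⁻¹r` because inversion reverses the Loewner order.
Since `e^ε ≤ 2`, the total is at most `(2 - 2e^{-ε}) rᵀQ⁻¹r ≤ 2ε rᵀQ⁻¹r`.
-/

open Matrix

/-- The local-norm Hessian matrix `Q = Aᵀ X S⁻¹ A`. -/
noncomputable def Qmat {n d : ℕ} (A : Matrix (Fin n) (Fin d) ℝ) (x s : Fin n → ℝ) :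
    Matrix (Fin d) (Fin d) ℝ :=
  Aᵀ * Matrix.diagonal (fun i => x i / s i) * A

namespace Matrix

variable {m n R : Type*}

lemma mulVec_injective_of_rank_eq_card {K : Type*} [Field K] [Fintype n] (A : Matrix m n K)
    (hA : A.rank = Fintype.card n) : Function.Injective A.mulVec := by
  have hker := A.mulVecLin.finrank_range_add_finrank_ker
  rw [← rank, hA, Module.finrank_fintype_fun_eq_card, add_eq_left,
    Submodule.finrank_eq_zero, LinearMap.ker_eq_bot] at hker
  exact hker

variable [Fintype m]

lemma IsSymm.dotProduct_mulVec_comm_s13 [CommSemiring R] {M : Matrix m m R} (hM : M.IsSymm)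
    (u v : m → R) : u ⬝ᵥ M *ᵥ v = v ⬝ᵥ M *ᵥ u := by
  rw [dotProduct_mulVec, ← mulVec_transpose, hM.eq, dotProduct_comm]

lemma dotProduct_mulVec_le_of_posSemidef_sub {A B : Matrix m m ℝ} (h : (B - A).PosSemidef)
    (v : m → ℝ) : v ⬝ᵥ A *ᵥ v ≤ v ⬝ᵥ B *ᵥ v := by
  have := h.dotProduct_mulVec_nonneg v
  rw [star_trivial, sub_mulVec, dotProduct_sub] at this
  linarith

variable [DecidableEq m]

lemma IsSymm.dotProduct_inv_mulVec_sub_mulVec [CommRing R] {Q : Matrix m m R} (hQ : Q.IsSymm)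
    (hQdet : IsUnit Q.det) (r u : m → R) :
    (r - Q *ᵥ u) ⬝ᵥ Q⁻¹ *ᵥ (r - Q *ᵥ u) = r ⬝ᵥ Q⁻¹ *ᵥ r - 2 * (r ⬝ᵥ u) + u ⬝ᵥ Q *ᵥ u := by
  have hQu : (Q *ᵥ u) ⬝ᵥ Q⁻¹ *ᵥ r = r ⬝ᵥ u := by
    rw [dotProduct_comm, hQ.dotProduct_mulVec_comm_s13, mulVec_mulVec, mul_nonsing_inv _ hQdet,
      one_mulVec, dotProduct_comm]
  rw [mulVec_sub, mulVec_mulVec, nonsing_inv_mul _ hQdet, one_mulVec, sub_dotProduct,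
    dotProduct_sub, dotProduct_sub, hQu, dotProduct_comm (Q *ᵥ u) u]
  ring

lemma PosDef.dotProduct_inv_mulVec_le {P B : Matrix m m ℝ} (hP : P.PosDef)
    (hPB : (B - P).PosSemidef) (r : m → ℝ) : r ⬝ᵥ B⁻¹ *ᵥ r ≤ r ⬝ᵥ P⁻¹ *ᵥ r := by
  have hB : B.PosDef := by simpa using hP.add_posSemidef hPB
  set w := B⁻¹ *ᵥ r
  set z := P⁻¹ *ᵥ r
  have hBw : B *ᵥ w = r := by
    rw [mulVec_mulVec, mul_nonsing_inv _ hB.det_pos.ne'.isUnit, one_mulVec]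
  have hPz : P *ᵥ z = r := by
    rw [mulVec_mulVec, mul_nonsing_inv _ hP.det_pos.ne'.isUnit, one_mulVec]
  have hP_symm : P.IsSymm := isHermitian_iff_isSymm.mp hP.1
  -- `0 ≤ (w - z)ᵀ P (w - z)` and `wᵀ P w ≤ wᵀ B w = rᵀ w` add up to `rᵀ w ≤ rᵀ z`.
  have hdiff := hP.posSemidef.dotProduct_mulVec_nonneg (w - z)
  have hwPw := dotProduct_mulVec_le_of_posSemidef_sub hPB w
  rw [star_trivial, mulVec_sub, sub_dotProduct, dotProduct_sub, dotProduct_sub,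
    hP_symm.dotProduct_mulVec_comm_s13 z w, hPz] at hdiff
  rw [hBw] at hwPw
  simp only [dotProduct_comm _ r] at hdiff hwPw ⊢
  linarith

end Matrix

open Real

lemma Qmat_posDef {n d : ℕ} {A : Matrix (Fin n) (Fin d) ℝ} (hA : Function.Injective A.mulVec)
    {x s : Fin n → ℝ} (hx : ∀ i, 0 < x i) (hs : ∀ i, 0 < s i) : (Qmat A x s).PosDef := by
  simpa [Qmat, conjTranspose_eq_transpose_of_trivial] using
    (PosDef.diagonal fun i => div_pos (hx i) (hs i)).conjTranspose_mul_mul_same hA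

lemma transpose_mulVec_corrector_sub {n d : ℕ} (A : Matrix (Fin n) (Fin d) ℝ)
    (xhat x s : Fin n → ℝ) (b : Fin d → ℝ) (H : Matrix (Fin d) (Fin d) ℝ) :
    Aᵀ *ᵥ (xhat + (diagonal (fun i => x i / s i) * A * H⁻¹) *ᵥ (b - Aᵀ *ᵥ xhat)) - b =
      (Aᵀ *ᵥ xhat - b) - Qmat A x s *ᵥ (H⁻¹ *ᵥ (Aᵀ *ᵥ xhat - b)) := by
  rw [mulVec_add, mulVec_mulVec, mulVec_mulVec, ← neg_sub (Aᵀ *ᵥ xhat) b, mulVec_neg, Qmat]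
  simp only [Matrix.mul_assoc]
  abel

lemma two_mul_sub_le_of_exp_bounds {ε s t q : ℝ} (hε : exp ε ≤ 2) (hs : 0 ≤ s)
    (hst : exp (-ε) * s ≤ t) (hqt : q ≤ exp ε * t) : s - 2 * t + q ≤ 2 * ε * s := by
  have hexp : exp ε * exp (-ε) = 1 := by rw [← exp_add, add_neg_cancel, exp_zero]
  have hlow : 1 - ε ≤ exp (-ε) := by linarith [add_one_le_exp (-ε)]
  nlinarith [mul_le_mul_of_nonneg_left hst (sub_nonneg.mpr hε), mul_le_mul_of_nonneg_right hlow hs]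

theorem stmt13_general (n d : ℕ) (A : Matrix (Fin n) (Fin d) ℝ) (hA : A.rank = d)
    (xhat x s : Fin n → ℝ) (b : Fin d → ℝ)
    (hx : ∀ i, 0 < x i) (hs : ∀ i, 0 < s i)
    (H : Matrix (Fin d) (Fin d) ℝ) (εH : ℝ) (hεH0 : 0 < εH) (hεH : εH ≤ 1/20)
    (h1 : (H - Real.exp (-εH) • Qmat A x s).PosSemidef)
    (h2 : (Real.exp εH • Qmat A x s - H).PosSemidef) :
    ((Aᵀ *ᵥ (xhat + (Matrix.diagonal (fun i => x i / s i) * A * H⁻¹) *ᵥ (b - Aᵀ *ᵥ xhat)) - b) ⬝ᵥ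
        ((Qmat A x s)⁻¹ *ᵥ
          (Aᵀ *ᵥ (xhat + (Matrix.diagonal (fun i => x i / s i) * A * H⁻¹) *ᵥ (b - Aᵀ *ᵥ xhat)) - b))) ≤
      5 * εH * ((Aᵀ *ᵥ xhat - b) ⬝ᵥ ((Qmat A x s)⁻¹ *ᵥ (Aᵀ *ᵥ xhat - b))) := by
  have hQ : (Qmat A x s).PosDef :=
    Qmat_posDef (mulVec_injective_of_rank_eq_card A (by simpa using hA)) hx hs
  have hH : H.PosDef := by simpa using (hQ.smul (exp_pos (-εH))).add_posSemidef h1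
  set Q := Qmat A x s
  set r := Aᵀ *ᵥ xhat - b
  set u := H⁻¹ *ᵥ r
  have hHu : H *ᵥ u = r := by
    rw [mulVec_mulVec, mul_nonsing_inv _ hH.det_pos.ne'.isUnit, one_mulVec]
  have hQu : u ⬝ᵥ Q *ᵥ u ≤ exp εH * (r ⬝ᵥ u) := by
    have := dotProduct_mulVec_le_of_posSemidef_sub h1 u
    rw [smul_mulVec, dotProduct_smul, smul_eq_mul, hHu, dotProduct_comm u r] at this
    calc u ⬝ᵥ Q *ᵥ u = exp εH * (exp (-εH) * (u ⬝ᵥ Q *ᵥ u)) := by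
          rw [← mul_assoc, ← exp_add, add_neg_cancel, exp_zero, one_mul]
      _ ≤ exp εH * (r ⬝ᵥ u) := by gcongr
  have hHinv : exp (-εH) * (r ⬝ᵥ Q⁻¹ *ᵥ r) ≤ r ⬝ᵥ u := by
    have := hH.dotProduct_inv_mulVec_le h2 r
    have hinv : (exp εH • Q)⁻¹ = exp (-εH) • Q⁻¹ := inv_eq_left_inv <| by
      rw [smul_mul_smul_comm, ← exp_add, neg_add_cancel, exp_zero, one_smul,
        nonsing_inv_mul _ hQ.det_pos.ne'.isUnit]
    rwa [hinv, smul_mulVec, dotProduct_smul, smul_eq_mul] at this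
  have hexp : exp εH ≤ 2 := (le_log_iff_exp_le two_pos).mp (by linarith [log_two_gt_d9])
  rw [transpose_mulVec_corrector_sub,
    (isHermitian_iff_isSymm.mp hQ.1).dotProduct_inv_mulVec_sub_mulVec hQ.det_pos.ne'.isUnit]
  have hr : 0 ≤ r ⬝ᵥ Q⁻¹ *ᵥ r := hQ.inv.posSemidef.dotProduct_mulVec_nonneg r
  calc _ ≤ 2 * εH * (r ⬝ᵥ Q⁻¹ *ᵥ r) := two_mul_sub_le_of_exp_bounds hexp hr hHinv hQu
    _ ≤ 5 * εH * (r ⬝ᵥ Q⁻¹ *ᵥ r) := by gcongr; norm_num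

/-- One corrective step decreases the infeasibility potential:
`‖Aᵀx_new − b‖²_{Q⁻¹} ≤ 5 ε_H ‖Aᵀx̂ − b‖²_{Q⁻¹}`. -/
theorem stmt13 (n d : ℕ) (A : Matrix (Fin n) (Fin d) ℝ) (hA : A.rank = d)
    (xhat x s : Fin n → ℝ) (b : Fin d → ℝ)
    (hxhat : ∀ i, 0 < xhat i) (hx : ∀ i, 0 < x i) (hs : ∀ i, 0 < s i)
    (H : Matrix (Fin d) (Fin d) ℝ) (εH : ℝ) (hεH0 : 0 < εH) (hεH : εH ≤ 1/20)
    (h1 : (H - Real.exp (-εH) • Qmat A x s).PosSemidef)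
    (h2 : (Real.exp εH • Qmat A x s - H).PosSemidef) :
    ((Aᵀ *ᵥ (xhat + (Matrix.diagonal (fun i => x i / s i) * A * H⁻¹) *ᵥ (b - Aᵀ *ᵥ xhat)) - b) ⬝ᵥ
        ((Qmat A x s)⁻¹ *ᵥ
          (Aᵀ *ᵥ (xhat + (Matrix.diagonal (fun i => x i / s i) * A * H⁻¹) *ᵥ (b - Aᵀ *ᵥ xhat)) - b))) ≤
      5 * εH * ((Aᵀ *ᵥ xhat - b) ⬝ᵥ ((Qmat A x s)⁻¹ *ᵥ (Aᵀ *ᵥ xhat - b))) :=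
  stmt13_general n d A hA xhat x s b hx hs H εH hεH0 hεH h1 h2
end

section
/- Suppose (x, s) ∈ ℝ^n_{>0} × ℝ^n_{>0} satisfy x_i s_i ≈_ε μ·τ_i for all i, where τ = σ(S^{-1/2-α}X^{1/2-α}A) + (d/n)·1 with α = 1/(4 log(4n/d)), ε ∈ [0, 1/80), and A ∈ ℝ^{n×d} non-degenerate. Then coordinatewise (1/2)·σ(S^{-1/2-α}X^{1/2-α}A) ≤ σ(S^{-1/2}X^{1/2}A) ≤ 2·σ(S^{-1/2-α}X^{1/2-α}A). -/
/-!
Put `B₀ = S^{-1/2-α} X^{1/2-α} A`; then `S^{-1/2} X^{1/2} A = C B₀` with `C = diag((xᵢsᵢ)^α)`.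
Since `0 ≤ σ ≤ 1`, the centering condition confines `xᵢsᵢ` to `[e^{-ε} μ d/n, 2 e^{ε} μ]`, so the
squared row factors `cᵢ²` lie in an interval `[a, κ a]` with `κ = (2 e^{2ε} n/d)^{2α} ≤ 2`; this
is what the choice `α = 1/(4 log(4n/d))` buys. Row factors in such an interval sandwich the Gram
matrices, `a B₀ᵀB₀ ≤ (CB₀)ᵀ(CB₀) ≤ κ a B₀ᵀB₀`, and since inversion reverses the Loewner order the
leverage scores `σᵢ(B) = bᵢᵀ(BᵀB)⁻¹bᵢ` of `B₀` and `CB₀` agree up to the factor `κ`.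
-/

open Matrix

/-- Leverage scores of a matrix `B`: the diagonal of `B(BᵀB)⁻¹Bᵀ`. -/
noncomputable def lev {n d : ℕ} (B : Matrix (Fin n) (Fin d) ℝ) (i : Fin n) : ℝ :=
  (B * (Bᵀ * B)⁻¹ * Bᵀ) i i

namespace Matrix

section Square

variable {ι : Type*} [Fintype ι] [DecidableEq ι]

lemma PosDef.mulVec_inv_mulVec {M : Matrix ι ι ℝ} (hM : M.PosDef) (v : ι → ℝ) :
    M *ᵥ (M⁻¹ *ᵥ v) = v := by
  rw [mulVec_mulVec, mul_nonsing_inv _ ((isUnit_iff_isUnit_det M).mp hM.isUnit), one_mulVec]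

lemma PosDef.two_mul_dotProduct_sub_le {M : Matrix ι ι ℝ} (hM : M.PosDef) (v y : ι → ℝ) :
    2 * (v ⬝ᵥ y) - y ⬝ᵥ (M *ᵥ y) ≤ v ⬝ᵥ (M⁻¹ *ᵥ v) := by
  set u := M⁻¹ *ᵥ v
  have hMu : M *ᵥ u = v := hM.mulVec_inv_mulVec v
  have hsymm : ∀ a b : ι → ℝ, a ⬝ᵥ (M *ᵥ b) = b ⬝ᵥ (M *ᵥ a) := fun a b => by
    rw [dotProduct_mulVec, ← vecMul_transpose, ← conjTranspose_eq_transpose_of_trivial,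
      hM.isHermitian.eq, dotProduct_comm]
  have hnonneg : 0 ≤ (y - u) ⬝ᵥ (M *ᵥ (y - u)) := by
    simpa using hM.posSemidef.dotProduct_mulVec_nonneg (y - u)
  rw [mulVec_sub, dotProduct_sub, sub_dotProduct, sub_dotProduct, hsymm u y, hMu,
    dotProduct_comm y v, dotProduct_comm u v] at hnonneg
  linarith

lemma PosDef.dotProduct_inv_mulVec_le_s15 {M N : Matrix ι ι ℝ} (hM : M.PosDef) (hN : N.PosDef)
    (hMN : ∀ y, y ⬝ᵥ (M *ᵥ y) ≤ y ⬝ᵥ (N *ᵥ y)) (v : ι → ℝ) :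
    v ⬝ᵥ (N⁻¹ *ᵥ v) ≤ v ⬝ᵥ (M⁻¹ *ᵥ v) := by
  set y := N⁻¹ *ᵥ v
  have hNy : N *ᵥ y = v := hN.mulVec_inv_mulVec v
  calc v ⬝ᵥ y = 2 * (v ⬝ᵥ y) - y ⬝ᵥ (N *ᵥ y) := by rw [hNy, dotProduct_comm y v]; ring
    _ ≤ 2 * (v ⬝ᵥ y) - y ⬝ᵥ (M *ᵥ y) := by linarith [hMN y]
    _ ≤ v ⬝ᵥ (M⁻¹ *ᵥ v) := hM.two_mul_dotProduct_sub_le v y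

end Square

section Rectangular

variable {m k : Type*} [Fintype k]

lemma mulVec_injective_of_rank_eq {B : Matrix m k ℝ} (hB : B.rank = Fintype.card k) :
    Function.Injective B.mulVec := by
  rw [mulVec_injective_iff, linearIndependent_iff_card_eq_finrank_span,
    Set.finrank, ← rank_eq_finrank_span_cols, hB]

variable [Fintype m]

lemma posDef_transpose_mul_self {B : Matrix m k ℝ} (hB : Function.Injective B.mulVec) :
    (Bᵀ * B).PosDef := by
  simpa [conjTranspose_eq_transpose_of_trivial] using PosDef.conjTranspose_mul_self B hB

lemma dotProduct_transpose_mul_self_mulVec (B : Matrix m k ℝ) (v : k → ℝ) :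
    v ⬝ᵥ ((Bᵀ * B) *ᵥ v) = ∑ i, (B *ᵥ v) i ^ 2 := by
  rw [← mulVec_mulVec, dotProduct_mulVec, vecMul_transpose]
  simp [dotProduct, sq]

lemma mulVec_injective_diagonal_mul [DecidableEq m] {B : Matrix m k ℝ}
    (hB : Function.Injective B.mulVec) {c : m → ℝ} (hc : ∀ i, c i ≠ 0) :
    Function.Injective (diagonal c * B).mulVec := by
  have hcomp : (diagonal c * B).mulVec = (diagonal c).mulVec ∘ B.mulVec :=
    funext fun v => (mulVec_mulVec v _ _).symm
  rw [hcomp]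
  exact (mulVec_injective_of_isUnit <| isUnit_diagonal.2 <|
    Pi.isUnit_iff.2 fun i => (hc i).isUnit).comp hB

end Rectangular

end Matrix

section Leverage

variable {n d : ℕ}

lemma lev_eq_dotProduct (B : Matrix (Fin n) (Fin d) ℝ) (i : Fin n) :
    lev B i = B i ⬝ᵥ ((Bᵀ * B)⁻¹ *ᵥ B i) := by
  simp only [lev, mul_apply, mulVec, dotProduct, transpose_apply, Finset.sum_mul, Finset.mul_sum]
  rw [Finset.sum_comm]
  exact Finset.sum_congr rfl fun _ _ => Finset.sum_congr rfl fun _ _ => by ring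

lemma lev_sq_le {B : Matrix (Fin n) (Fin d) ℝ} (hB : Function.Injective B.mulVec) (i : Fin n) :
    lev B i ^ 2 ≤ lev B i := by
  set u := (Bᵀ * B)⁻¹ *ᵥ B i
  have hGu : (Bᵀ * B) *ᵥ u = B i := (posDef_transpose_mul_self hB).mulVec_inv_mulVec _
  have hlev : lev B i = (B *ᵥ u) i := lev_eq_dotProduct B i
  have hsum : lev B i = ∑ j, (B *ᵥ u) j ^ 2 := by
    rw [lev_eq_dotProduct, ← hGu, dotProduct_comm, ← dotProduct_transpose_mul_self_mulVec, hGu]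
  calc lev B i ^ 2 = (B *ᵥ u) i ^ 2 := by rw [hlev]
    _ ≤ ∑ j, (B *ᵥ u) j ^ 2 :=
      Finset.single_le_sum (fun j _ => sq_nonneg ((B *ᵥ u) j)) (Finset.mem_univ i)
    _ = lev B i := hsum.symm

lemma lev_nonneg {B : Matrix (Fin n) (Fin d) ℝ} (hB : Function.Injective B.mulVec) (i : Fin n) :
    0 ≤ lev B i := by
  nlinarith [lev_sq_le hB i, sq_nonneg (lev B i)]

lemma lev_le_one {B : Matrix (Fin n) (Fin d) ℝ} (hB : Function.Injective B.mulVec) (i : Fin n) :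
    lev B i ≤ 1 := by
  nlinarith [lev_sq_le hB i, sq_nonneg (lev B i)]

lemma lev_diagonal_mul_le {B : Matrix (Fin n) (Fin d) ℝ} (hB : Function.Injective B.mulVec)
    {c : Fin n → ℝ} {a κ : ℝ} (ha : 0 < a) (hac : ∀ i, a ≤ c i ^ 2) (hcκ : ∀ i, c i ^ 2 ≤ κ * a)
    (i : Fin n) : lev (diagonal c * B) i ≤ κ * lev B i := by
  have hDB := mulVec_injective_diagonal_mul hB (c := c) fun i hci => by nlinarith [hac i, hci]
  set G' := (diagonal c * B)ᵀ * (diagonal c * B)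
  have hG := posDef_transpose_mul_self hB
  have hquad : ∀ y, y ⬝ᵥ ((a • (Bᵀ * B)) *ᵥ y) ≤ y ⬝ᵥ (G' *ᵥ y) := fun y => by
    rw [smul_mulVec, dotProduct_smul, smul_eq_mul, dotProduct_transpose_mul_self_mulVec,
      dotProduct_transpose_mul_self_mulVec, Finset.mul_sum]
    refine Finset.sum_le_sum fun j _ => ?_
    rw [← mulVec_mulVec, mulVec_diagonal, mul_pow]
    exact mul_le_mul_of_nonneg_right (hac j) (sq_nonneg _)
  have hinv := (hG.smul ha).dotProduct_inv_mulVec_le_s15 (posDef_transpose_mul_self hDB) hquad (B i)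
  have := invertibleOfNonzero ha.ne'
  rw [inv_smul _ a ((isUnit_iff_isUnit_det _).mp hG.isUnit), invOf_eq_inv, smul_mulVec,
    dotProduct_smul, ← lev_eq_dotProduct, smul_eq_mul] at hinv
  have hrow : (diagonal c * B) i = c i • B i := funext fun j => by simp [diagonal_mul]
  have hG'inv : 0 ≤ B i ⬝ᵥ (G'⁻¹ *ᵥ B i) := by
    simpa only [star_trivial] using
      (posDef_transpose_mul_self hDB).inv.posSemidef.dotProduct_mulVec_nonneg (B i)
  calc lev (diagonal c * B) i = c i ^ 2 * (B i ⬝ᵥ (G'⁻¹ *ᵥ B i)) := by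
        rw [lev_eq_dotProduct, hrow, smul_dotProduct, mulVec_smul, dotProduct_smul, smul_eq_mul,
          smul_eq_mul]
        ring
    _ ≤ κ * a * (a⁻¹ * lev B i) := mul_le_mul (hcκ i) hinv hG'inv (by linarith [hac i, hcκ i])
    _ = κ * lev B i := by field_simp

lemma lev_le_lev_diagonal_mul {B : Matrix (Fin n) (Fin d) ℝ} (hB : Function.Injective B.mulVec)
    {c : Fin n → ℝ} {a κ : ℝ} (ha : 0 < a) (hac : ∀ i, a ≤ c i ^ 2) (hcκ : ∀ i, c i ^ 2 ≤ κ * a)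
    (i : Fin n) : lev B i ≤ κ * lev (diagonal c * B) i := by
  have hc : ∀ i, c i ≠ 0 := fun i hci => by nlinarith [hac i, hci]
  have hκa : 0 < κ * a := ha.trans_le ((hac i).trans (hcκ i))
  have hκ : 0 < κ := pos_of_mul_pos_left hκa ha.le
  have hcancel : diagonal c⁻¹ * (diagonal c * B) = B := by
    ext i j
    simp [diagonal_mul, ← mul_assoc, inv_mul_cancel₀ (hc i)]
  have h := lev_diagonal_mul_le (mulVec_injective_diagonal_mul hB hc) (c := c⁻¹) (κ := κ)
    (inv_pos.2 hκa)
    (fun i => by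
      rw [Pi.inv_apply, inv_pow]
      exact inv_anti₀ (sq_pos_of_ne_zero (hc i)) (hcκ i))
    (fun i => by
      rw [Pi.inv_apply, inv_pow, mul_inv, ← mul_assoc, mul_inv_cancel₀ hκ.ne', one_mul]
      exact inv_anti₀ ha (hac i)) i
  rwa [hcancel] at h

end Leverage

lemma rpow_mul_rpow_eq_mul_rpow_mul {x s : ℝ} (hx : 0 < x) (hs : 0 < s) (p q α : ℝ) :
    s ^ p * x ^ q = (x * s) ^ α * (s ^ (p - α) * x ^ (q - α)) := by
  rw [Real.mul_rpow hx.le hs.le]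
  calc s ^ p * x ^ q = (s ^ α * s ^ (p - α)) * (x ^ α * x ^ (q - α)) := by
        rw [← Real.rpow_add hs, ← Real.rpow_add hx, add_sub_cancel, add_sub_cancel]
    _ = x ^ α * s ^ α * (s ^ (p - α) * x ^ (q - α)) := by ring

lemma two_mul_exp_mul_div_rpow_le_two {n d ε : ℝ} (hd : 0 < d) (hdn : d ≤ n) (hε : ε ≤ 1 / 2) :
    (2 * Real.exp (2 * ε) * n / d) ^ (2 * (1 / (4 * Real.log (4 * n / d)))) ≤ 2 := by
  have hn : 0 < n := hd.trans_le hdn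
  have hL : 0 ≤ Real.log (n / d) := Real.log_nonneg ((one_le_div hd).2 hdn)
  have hT : Real.log (4 * n / d) = 2 * Real.log 2 + Real.log (n / d) := by
    rw [mul_div_assoc, Real.log_mul (by norm_num) (by positivity),
      show (4 : ℝ) = 2 ^ 2 by norm_num, Real.log_pow, Nat.cast_ofNat]
  have hbase :
      Real.log (2 * Real.exp (2 * ε) * n / d) = Real.log 2 + 2 * ε + Real.log (n / d) := by
    rw [mul_div_assoc, Real.log_mul (by positivity) (by positivity),
      Real.log_mul (by norm_num) (Real.exp_pos _).ne', Real.log_exp]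
  have hlog2 := Real.log_two_gt_d9
  rw [Real.rpow_def_of_pos (by positivity), hbase, hT]
  refine (Real.exp_le_exp.2 ?_).trans (Real.exp_log two_pos).le
  rw [mul_one_div, ← mul_div_assoc, div_le_iff₀ (by positivity)]
  nlinarith

lemma centered_bounds {σ r p μ ε : ℝ} (hσ0 : 0 ≤ σ) (hσ1 : σ ≤ 1) (hr : r ≤ 1) (hμ : 0 ≤ μ)
    (hlo : Real.exp (-ε) * (μ * (σ + r)) ≤ p) (hhi : p ≤ Real.exp ε * (μ * (σ + r))) :
    Real.exp (-ε) * μ * r ≤ p ∧ p ≤ 2 * Real.exp ε * μ := by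
  constructor
  · calc Real.exp (-ε) * μ * r = Real.exp (-ε) * (μ * (0 + r)) := by ring
      _ ≤ Real.exp (-ε) * (μ * (σ + r)) := by gcongr
      _ ≤ p := hlo
  · calc p ≤ Real.exp ε * (μ * (σ + r)) := hhi
      _ ≤ Real.exp ε * (μ * (1 + 1)) := by gcongr
      _ = 2 * Real.exp ε * μ := by ring

lemma centered_rpow_sq_bounds {n d σ p μ ε α : ℝ} (hd : 0 < d) (hdn : d ≤ n) (hμ : 0 < μ)
    (hε : ε ≤ 1 / 2) (hα : α = 1 / (4 * Real.log (4 * n / d))) (hσ0 : 0 ≤ σ) (hσ1 : σ ≤ 1)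
    (hlo : Real.exp (-ε) * (μ * (σ + d / n)) ≤ p) (hhi : p ≤ Real.exp ε * (μ * (σ + d / n))) :
    (Real.exp (-ε) * μ * (d / n)) ^ (2 * α) ≤ (p ^ α) ^ 2 ∧
      (p ^ α) ^ 2 ≤ 2 * (Real.exp (-ε) * μ * (d / n)) ^ (2 * α) := by
  subst hα
  set α := 1 / (4 * Real.log (4 * n / d))
  have hn : 0 < n := hd.trans_le hdn
  have hα : 0 < α := by
    have := Real.log_pos ((one_lt_div hd).2 (by linarith) : 1 < 4 * n / d)
    positivity
  set a := Real.exp (-ε) * μ * (d / n)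
  have ha : 0 < a := by positivity
  obtain ⟨hap, hp⟩ := centered_bounds hσ0 hσ1 (div_le_one_of_le₀ hdn hn.le) hμ.le hlo hhi
  have hpα : (p ^ α) ^ 2 = p ^ (2 * α) := by
    rw [← Real.rpow_natCast, ← Real.rpow_mul (ha.trans_le hap).le]
    ring_nf
  have hratio : 2 * Real.exp ε * μ = (2 * Real.exp (2 * ε) * n / d) * a := by
    rw [show 2 * ε = ε - -ε by ring, Real.exp_sub]
    simp only [a]
    field_simp
  rw [hpα]
  refine ⟨Real.rpow_le_rpow ha.le hap (by positivity), ?_⟩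
  calc p ^ (2 * α) ≤ (2 * Real.exp ε * μ) ^ (2 * α) :=
        Real.rpow_le_rpow (ha.trans_le hap).le hp (by positivity)
    _ = (2 * Real.exp (2 * ε) * n / d) ^ (2 * α) * a ^ (2 * α) := by
        rw [hratio, Real.mul_rpow (by positivity) ha.le]
    _ ≤ 2 * a ^ (2 * α) := by
        gcongr
        exact two_mul_exp_mul_div_rpow_le_two hd hdn hε

theorem stmt15_general (n d : ℕ) (hd : 0 < d) (hdn : d ≤ n)
    (A : Matrix (Fin n) (Fin d) ℝ) (hA : A.rank = d)
    (x s : Fin n → ℝ) (hx : ∀ i, 0 < x i) (hs : ∀ i, 0 < s i)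
    (μ ε : ℝ) (hμ : 0 < μ) (hε : ε < 1/80)
    (hcenter : ∀ i,
      Real.exp (-ε) * (μ * (lev (Matrix.of fun i' j =>
          s i' ^ (-(1/2 : ℝ) - 1 / (4 * Real.log (4 * n / d))) *
            x i' ^ ((1/2 : ℝ) - 1 / (4 * Real.log (4 * n / d))) * A i' j) i + (d : ℝ) / n)) ≤
        x i * s i ∧
      x i * s i ≤
        Real.exp ε * (μ * (lev (Matrix.of fun i' j =>
          s i' ^ (-(1/2 : ℝ) - 1 / (4 * Real.log (4 * n / d))) *
            x i' ^ ((1/2 : ℝ) - 1 / (4 * Real.log (4 * n / d))) * A i' j) i + (d : ℝ) / n))) :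
    ∀ i,
      (1/2) * lev (Matrix.of fun i' j =>
          s i' ^ (-(1/2 : ℝ) - 1 / (4 * Real.log (4 * n / d))) *
            x i' ^ ((1/2 : ℝ) - 1 / (4 * Real.log (4 * n / d))) * A i' j) i ≤
        lev (Matrix.of fun i' j => s i' ^ (-(1/2 : ℝ)) * x i' ^ ((1/2 : ℝ)) * A i' j) i ∧
      lev (Matrix.of fun i' j => s i' ^ (-(1/2 : ℝ)) * x i' ^ ((1/2 : ℝ)) * A i' j) i ≤
        2 * lev (Matrix.of fun i' j =>
          s i' ^ (-(1/2 : ℝ) - 1 / (4 * Real.log (4 * n / d))) *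
            x i' ^ ((1/2 : ℝ) - 1 / (4 * Real.log (4 * n / d))) * A i' j) i := by
  have hd' : (0 : ℝ) < d := by exact_mod_cast hd
  have hdn' : (d : ℝ) ≤ n := by exact_mod_cast hdn
  have hn' : (0 : ℝ) < n := hd'.trans_le hdn'
  set α := 1 / (4 * Real.log (4 * (n : ℝ) / d))
  set e : Fin n → ℝ := fun i => s i ^ (-(1/2 : ℝ) - α) * x i ^ ((1/2 : ℝ) - α)
  set c : Fin n → ℝ := fun i => (x i * s i) ^ α
  have hB₀ : (Matrix.of fun i j => s i ^ (-(1/2 : ℝ) - α) * x i ^ ((1/2 : ℝ) - α) * A i j) =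
      diagonal e * A := by
    ext i j; simp [diagonal_mul, e]
  have hB₁ : (Matrix.of fun i j => s i ^ (-(1/2 : ℝ)) * x i ^ (1/2 : ℝ) * A i j) =
      diagonal c * (diagonal e * A) := by
    ext i j
    simp only [of_apply, diagonal_mul, c, e]
    rw [rpow_mul_rpow_eq_mul_rpow_mul (hx i) (hs i) (-(1/2)) (1/2) α, mul_assoc]
  rw [hB₀] at hcenter ⊢
  rw [hB₁]
  have hinj : Function.Injective (diagonal e * A).mulVec :=
    mulVec_injective_diagonal_mul (mulVec_injective_of_rank_eq (by rwa [Fintype.card_fin])) fun i =>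
      (mul_pos (Real.rpow_pos_of_pos (hs i) _) (Real.rpow_pos_of_pos (hx i) _)).ne'
  have hc := fun i => centered_rpow_sq_bounds hd' hdn' hμ (by linarith) rfl (lev_nonneg hinj i)
    (lev_le_one hinj i) (hcenter i).1 (hcenter i).2
  have ha : 0 < (Real.exp (-ε) * μ * (d / n)) ^ (2 * α) := by positivity
  intro i
  exact ⟨by linarith [lev_le_lev_diagonal_mul hinj ha (fun i => (hc i).1) (fun i => (hc i).2) i],
    lev_diagonal_mul_le hinj ha (fun i => (hc i).1) (fun i => (hc i).2) i⟩

/-- For `(μ,ε)`-centered points, the leverage scores of `S^{-1/2}X^{1/2}A` are within a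
factor `2` of those of `S^{-1/2-α}X^{1/2-α}A`, where `α = 1/(4 log(4n/d))`. -/
theorem stmt15 (n d : ℕ) (hd : 0 < d) (hdn : d ≤ n)
    (A : Matrix (Fin n) (Fin d) ℝ) (hA : A.rank = d) (hrows : ∀ i, ∃ j, A i j ≠ 0)
    (x s : Fin n → ℝ) (hx : ∀ i, 0 < x i) (hs : ∀ i, 0 < s i)
    (μ ε : ℝ) (hμ : 0 < μ) (hε0 : 0 ≤ ε) (hε : ε < 1/80)
    (hcenter : ∀ i,
      Real.exp (-ε) * (μ * (lev (Matrix.of fun i' j =>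
          s i' ^ (-(1/2 : ℝ) - 1 / (4 * Real.log (4 * n / d))) *
            x i' ^ ((1/2 : ℝ) - 1 / (4 * Real.log (4 * n / d))) * A i' j) i + (d : ℝ) / n)) ≤
        x i * s i ∧
      x i * s i ≤
        Real.exp ε * (μ * (lev (Matrix.of fun i' j =>
          s i' ^ (-(1/2 : ℝ) - 1 / (4 * Real.log (4 * n / d))) *
            x i' ^ ((1/2 : ℝ) - 1 / (4 * Real.log (4 * n / d))) * A i' j) i + (d : ℝ) / n))) :
    ∀ i,
      (1/2) * lev (Matrix.of fun i' j =>
          s i' ^ (-(1/2 : ℝ) - 1 / (4 * Real.log (4 * n / d))) *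
            x i' ^ ((1/2 : ℝ) - 1 / (4 * Real.log (4 * n / d))) * A i' j) i ≤
        lev (Matrix.of fun i' j => s i' ^ (-(1/2 : ℝ)) * x i' ^ ((1/2 : ℝ)) * A i' j) i ∧
      lev (Matrix.of fun i' j => s i' ^ (-(1/2 : ℝ)) * x i' ^ ((1/2 : ℝ)) * A i' j) i ≤
        2 * lev (Matrix.of fun i' j =>
          s i' ^ (-(1/2 : ℝ) - 1 / (4 * Real.log (4 * n / d))) *
            x i' ^ ((1/2 : ℝ) - 1 / (4 * Real.log (4 * n / d))) * A i' j) i :=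
  stmt15_general n d hd hdn A hA x s hx hs μ ε hμ hε hcenter
end

section
/- Let X ≥ 0 be a geometric random variable with P[X ≥ k] = 2^{-k} for all integers k ≥ 0. Let (Z_k)_{k≥1} be a sequence of random vectors in ℝ^d with uniformly bounded norms, independent of X, and define the truncated randomized series Y = Σ_{k=1}^{X} 2^k Z_k. Then E[Y] = Σ_{k=1}^{∞} E[Z_k], provided the right-hand side converges absolutely. -/
/-!
Write the truncated sum as the series `∑ₖ 1{X ≥ k} P[X ≥ k]⁻¹ Zₖ`, which has only finitely many
nonzero terms at each point. Since `X` is independent of `Zₖ`, the `k`-th term has mean `E[Zₖ]`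
and its norm has mean `E‖Zₖ‖`; the latter are summable, so the expectation may be taken term by
term. The geometric law of `X` makes the weights `P[X ≥ k]⁻¹` equal to `2ᵏ`.
-/

open MeasureTheory ProbabilityTheory

theorem Finset.sum_Icc_one_eq_tsum_ite {E : Type*} [AddCommMonoid E] [TopologicalSpace E]
    (f : ℕ → E) (n : ℕ) :
    ∑ k ∈ Finset.Icc 1 n, f k = ∑' k, if k + 1 ≤ n then f (k + 1) else 0 := by
  rw [tsum_eq_sum (s := Finset.range n) fun k hk => if_neg (by simpa using hk),
    ← Finset.Ico_add_one_right_eq_Icc, Finset.sum_Ico_eq_sum_range, add_tsub_cancel_right]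
  refine Finset.sum_congr rfl fun k hk => ?_
  rw [if_pos (Nat.succ_le_of_lt (Finset.mem_range.mp hk)), add_comm 1 k]

namespace ProbabilityTheory

variable {Ω α E : Type*} [MeasurableSpace Ω] {μ : Measure Ω} [MeasurableSpace α]
  [NormedAddCommGroup E] [NormedSpace ℝ E] [MeasurableSpace E] [BorelSpace E]
  {X : Ω → α} {W : Ω → E} {S : Set α}

theorem IndepFun.integral_indicator_preimage (hXW : IndepFun X W μ) (hX : Measurable X)
    (hW : AEStronglyMeasurable W μ) (hS : MeasurableSet S) :
    ∫ ω, (X ⁻¹' S).indicator W ω ∂μ = μ.real (X ⁻¹' S) • ∫ ω, W ω ∂μ := by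
  have hind : Measurable (S.indicator (1 : α → ℝ)) := measurable_one.indicator hS
  have hsplit : (X ⁻¹' S).indicator W = (S.indicator (1 : α → ℝ) ∘ X) • (id ∘ W) := by
    funext ω
    by_cases h : X ω ∈ S <;> simp [h]
  rw [hsplit, (hXW.comp hind measurable_id).integral_smul_eq_smul_integral
    (hind.comp hX).aestronglyMeasurable hW]
  congr 1
  exact integral_indicator_one (hX hS)

theorem IndepFun.integral_indicator_preimage_inv_measureReal_smul (hXW : IndepFun X W μ)
    (hX : Measurable X) (hW : AEStronglyMeasurable W μ) (hS : MeasurableSet S)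
    (hpos : μ.real (X ⁻¹' S) ≠ 0) :
    ∫ ω, (X ⁻¹' S).indicator (fun ω => (μ.real (X ⁻¹' S))⁻¹ • W ω) ω ∂μ =
      ∫ ω, W ω ∂μ := by
  rw [Set.indicator_const_smul, integral_smul, hXW.integral_indicator_preimage hX hW hS,
    smul_smul, inv_mul_cancel₀ hpos, one_smul]

theorem integral_sum_Icc_inv_tail_smul_eq_tsum [CompleteSpace E] {X : Ω → ℕ}
    (hX : Measurable X) {Z : ℕ → Ω → E} (hZ : ∀ k, Integrable (Z k) μ)
    (hindep : ∀ k, IndepFun X (Z k) μ)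
    (htail : ∀ k, μ.real {ω | k ≤ X ω} ≠ 0)
    (hsum : Summable fun k => ∫ ω, ‖Z (k + 1) ω‖ ∂μ) :
    ∫ ω, ∑ k ∈ Finset.Icc 1 (X ω), (μ.real {ω | k ≤ X ω})⁻¹ • Z k ω ∂μ =
      ∑' k, ∫ ω, Z (k + 1) ω ∂μ := by
  set F : ℕ → Ω → E := fun k =>
    {ω | k + 1 ≤ X ω}.indicator fun ω => (μ.real {ω | k + 1 ≤ X ω})⁻¹ • Z (k + 1) ω
  have hF_int k : Integrable (F k) μ := ((hZ (k + 1)).smul _).indicator (hX measurableSet_Ici)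
  have hF_integral k : ∫ ω, F k ω ∂μ = ∫ ω, Z (k + 1) ω ∂μ :=
    (hindep (k + 1)).integral_indicator_preimage_inv_measureReal_smul hX
      (hZ (k + 1)).aestronglyMeasurable measurableSet_Ici (htail (k + 1))
  have hF_norm k : ∫ ω, ‖F k ω‖ ∂μ = ∫ ω, ‖Z (k + 1) ω‖ ∂μ := by
    have hindep_norm : IndepFun X (fun ω => ‖Z (k + 1) ω‖) μ :=
      (hindep (k + 1)).comp measurable_id measurable_norm
    simp only [F, norm_indicator_eq_indicator_norm, norm_smul, norm_inv, Real.norm_eq_abs,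
      abs_of_nonneg measureReal_nonneg]
    exact hindep_norm.integral_indicator_preimage_inv_measureReal_smul hX
      (hZ (k + 1)).norm.aestronglyMeasurable measurableSet_Ici (htail (k + 1))
  calc ∫ ω, ∑ k ∈ Finset.Icc 1 (X ω), (μ.real {ω | k ≤ X ω})⁻¹ • Z k ω ∂μ
      = ∫ ω, ∑' k, F k ω ∂μ := by
        simp only [F, Finset.sum_Icc_one_eq_tsum_ite, Set.indicator_apply]
        rfl
    _ = ∑' k, ∫ ω, F k ω ∂μ :=
        (integral_tsum_of_summable_integral_norm hF_int (by simpa only [hF_norm] using hsum)).symm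
    _ = ∑' k, ∫ ω, Z (k + 1) ω ∂μ := by simp only [hF_integral]

end ProbabilityTheory

/-- The unbiased geometric truncation trick: if `P[X ≥ k] = 2^{-k}`, the `Z_k` are uniformly
bounded and independent of `X`, and `Σ_k E[‖Z_k‖]` converges, then
`E[Σ_{k=1}^X 2^k Z_k] = Σ_{k=1}^∞ E[Z_k]`. -/
theorem stmt17 {Ω : Type*} [MeasurableSpace Ω] (μ : Measure Ω) [IsProbabilityMeasure μ]
    (d : ℕ) (X : Ω → ℕ) (hX : Measurable X)
    (hgeom : ∀ k : ℕ, μ {ω | k ≤ X ω} = ENNReal.ofReal ((1/2 : ℝ) ^ k))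
    (Z : ℕ → Ω → Fin d → ℝ) (hZmeas : ∀ k, Measurable (Z k))
    (Cb : ℝ) (hbd : ∀ k ω, ‖Z k ω‖ ≤ Cb)
    (hindep : IndepFun X (fun ω => fun k => Z k ω) μ)
    (hsum : Summable (fun k : ℕ => ∫ ω, ‖Z (k + 1) ω‖ ∂μ)) :
    ∫ ω, (∑ k ∈ Finset.Icc 1 (X ω), (2 : ℝ) ^ k • Z k ω) ∂μ =
      ∑' k : ℕ, ∫ ω, Z (k + 1) ω ∂μ := by
  have htail k : μ.real {ω | k ≤ X ω} = (1 / 2 : ℝ) ^ k := by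
    rw [measureReal_def, hgeom, ENNReal.toReal_ofReal (by positivity)]
  have hweight k : (μ.real {ω | k ≤ X ω})⁻¹ = (2 : ℝ) ^ k := by
    rw [htail, one_div, inv_pow, inv_inv]
  have hZ k : Integrable (Z k) μ :=
    .of_bound (hZmeas k).aestronglyMeasurable Cb (.of_forall (hbd k))
  simpa only [hweight] using integral_sum_Icc_inv_tail_smul_eq_tsum hX hZ
    (fun k => hindep.comp measurable_id (measurable_pi_apply k))
    (fun k => by rw [htail]; positivity)
    hsum
end
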